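/- arXiv:1303.3654 — 8 statements merged into one kernel-verified Lean document; each statement's English description precedes it below -/
import Mathlib

section
/- Let X be a real Banach space, let f ∈ Γ(X), and let x̄ ∈ X, ȳ* ∈ X* with ȳ* ∈ ∂f(x̄). Suppose there exist a neighborhood U of x̄ and a constant c > 0 such that f(x) ≥ f(x̄) + ⟨ȳ*, x − x̄⟩ + c·d(x, (∂f)⁻¹(ȳ*))² for all x ∈ U. Then ∂f is metrically subregular at x̄ for ȳ* with constant 1/c; more precisely, d(x, (∂f)⁻¹(ȳ*)) ≤ (1/c)·d(ȳ*, ∂f(x)) for all x ∈ U. -/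
/-! The growth condition at `x` and the subgradient inequalities of `y ∈ ∂f(x)` at `z` and of
`ȳ* ∈ ∂f(z)` at `x̄` add up to `c·d(x, S)² ≤ ⟨y - ȳ*, x - z⟩ ≤ ‖y - ȳ*‖·‖x - z‖` for every
`z ∈ S = (∂f)⁻¹(ȳ*)`. Taking the infimum over `z` gives `c·d(x, S)² ≤ ‖y - ȳ*‖·d(x, S)`,
and dividing by `c·d(x, S)` gives the bound. -/

open Topology Filter Metric Set

/-- The convex subdifferential of an extended-real-valued function `f` at `x`:
the set of continuous linear functionals `p` with `f z ≥ f x + ⟨p, z - x⟩` for all `z`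
(empty when `f x = ∞`). -/
noncomputable def subdiff {X : Type*} [NormedAddCommGroup X] [NormedSpace ℝ X]
    (f : X → EReal) (x : X) : Set (X →L[ℝ] ℝ) :=
  {p | f x ≠ ⊤ ∧ ∀ z : X, f x + ((p (z - x) : ℝ) : EReal) ≤ f z}

theorem Metric.infDist_le_of_forall_mul_sq_le {α : Type*} [PseudoMetricSpace α] {x : α}
    {s : Set α} {c K : ℝ} (hs : s.Nonempty) (hc : 0 < c) (hK : 0 ≤ K)
    (h : ∀ z ∈ s, c * infDist x s ^ 2 ≤ K * dist x z) :
    infDist x s ≤ (1 / c) * K := by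
  have : Nonempty s := hs.to_subtype
  have hsq : c * infDist x s ^ 2 ≤ K * infDist x s := by
    calc c * infDist x s ^ 2 ≤ ⨅ z : s, K * dist x z := le_ciInf fun z => h z z.2
      _ = K * infDist x s := by rw [infDist_eq_iInf, Real.mul_iInf_of_nonneg hK]
  rw [one_div_mul_eq_div, le_div_iff₀ hc]
  nlinarith [infDist_nonneg (x := x) (s := s)]

section Subdiff

variable {X : Type*} [NormedAddCommGroup X] [NormedSpace ℝ X] {f : X → EReal}

theorem toReal_add_le_toReal_of_mem_subdiff (hbot : ∀ x, f x ≠ ⊥) {p : X →L[ℝ] ℝ} {x : X}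
    (hp : p ∈ subdiff f x) {z : X} (hz : f z ≠ ⊤) :
    (f x).toReal + p (z - x) ≤ (f z).toReal := by
  have h := hp.2 z
  rw [← EReal.coe_toReal hp.1 (hbot x), ← EReal.coe_toReal hz (hbot z)] at h
  exact_mod_cast h

theorem mul_sq_le_sub_apply_of_mem_subdiff (hbot : ∀ x, f x ≠ ⊥) {xbar x z : X}
    {ybar y : X →L[ℝ] ℝ} {c r : ℝ} (hybar : ybar ∈ subdiff f xbar)
    (hgrowth : f xbar + ((ybar (x - xbar) + c * r ^ 2 : ℝ) : EReal) ≤ f x)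
    (hy : y ∈ subdiff f x) (hz : ybar ∈ subdiff f z) :
    c * r ^ 2 ≤ (y - ybar) (x - z) := by
  have hyz := toReal_add_le_toReal_of_mem_subdiff hbot hy hz.1
  have hzxbar := toReal_add_le_toReal_of_mem_subdiff hbot hz hybar.1
  rw [← EReal.coe_toReal hybar.1 (hbot xbar), ← EReal.coe_toReal hy.1 (hbot x)] at hgrowth
  have hgrowth : (f xbar).toReal + (ybar (x - xbar) + c * r ^ 2) ≤ (f x).toReal := by
    exact_mod_cast hgrowth
  simp only [sub_apply, map_sub] at hyz hzxbar hgrowth ⊢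
  linarith

end Subdiff

theorem stmt_0_general {X : Type*} [NormedAddCommGroup X] [NormedSpace ℝ X]
    (f : X → EReal)
    (hne_bot : ∀ x, f x ≠ ⊥)
    (xbar : X) (ybar : X →L[ℝ] ℝ) (hybar : ybar ∈ subdiff f xbar)
    (U : Set X) (c : ℝ) (hc : 0 < c)
    (growth : ∀ x ∈ U,
      f xbar + ((ybar (x - xbar) + c * (infDist x {z | ybar ∈ subdiff f z}) ^ 2 : ℝ) : EReal)
        ≤ f x) :
    ∀ x ∈ U, ∀ y ∈ subdiff f x,
      infDist x {z | ybar ∈ subdiff f z} ≤ (1 / c) * ‖y - ybar‖ := by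
  intro x hx y hy
  refine infDist_le_of_forall_mul_sq_le ⟨xbar, hybar⟩ hc (norm_nonneg _) fun z hz => ?_
  calc c * infDist x {z | ybar ∈ subdiff f z} ^ 2
      ≤ (y - ybar) (x - z) := mul_sq_le_sub_apply_of_mem_subdiff hne_bot hybar (growth x hx) hy hz
    _ ≤ ‖y - ybar‖ * dist x z := by
      rw [dist_eq_norm]
      exact (le_abs_self _).trans ((y - ybar).le_opNorm _)

/-- If `f ∈ Γ(X)` on a Banach space, `ȳ* ∈ ∂f(x̄)`, and the quadratic growth
condition `f(x) ≥ f(x̄) + ⟨ȳ*, x - x̄⟩ + c·d(x, (∂f)⁻¹(ȳ*))²` holds on a neighborhood `U`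
of `x̄`, then `∂f` is metrically subregular at `x̄` for `ȳ*` with constant `1/c`:
`d(x, (∂f)⁻¹(ȳ*)) ≤ (1/c)·d(ȳ*, ∂f(x))` for all `x ∈ U` (stated pointwise over
`y* ∈ ∂f(x)`, which matches the convention `d(ȳ*, ∅) = ∞`). -/
theorem stmt_0 {X : Type*} [NormedAddCommGroup X] [NormedSpace ℝ X] [CompleteSpace X]
    (f : X → EReal)
    (hproper : ∃ x, f x ≠ ⊤) (hne_bot : ∀ x, f x ≠ ⊥)
    (hlsc : LowerSemicontinuous f)
    (hconv : ∀ x y : X, ∀ a b : ℝ, 0 ≤ a → 0 ≤ b → a + b = 1 →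
      f (a • x + b • y) ≤ (a : EReal) * f x + (b : EReal) * f y)
    (xbar : X) (ybar : X →L[ℝ] ℝ) (hybar : ybar ∈ subdiff f xbar)
    (U : Set X) (hU : U ∈ 𝓝 xbar) (c : ℝ) (hc : 0 < c)
    (growth : ∀ x ∈ U,
      f xbar + ((ybar (x - xbar) + c * (infDist x {z | ybar ∈ subdiff f z}) ^ 2 : ℝ) : EReal)
        ≤ f x) :
    ∀ x ∈ U, ∀ y ∈ subdiff f x,
      infDist x {z | ybar ∈ subdiff f z} ≤ (1 / c) * ‖y - ybar‖ :=
  stmt_0_general f hne_bot xbar ybar hybar U c hc growth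
end

section
/- Let X be a real Banach space, let f ∈ Γ(X), and let x̄ ∈ X, ȳ* ∈ X* with ȳ* ∈ ∂f(x̄). Suppose there exist constants κ > 0 and a > 0 such that d(x, (∂f)⁻¹(ȳ*)) ≤ κ·d(ȳ*, ∂f(x)) for all x in the closed ball B_a(x̄). Then for every constant c with 0 < c < 1/(4κ), one has f(x) ≥ f(x̄) + ⟨ȳ*, x − x̄⟩ + c·d(x, (∂f)⁻¹(ȳ*))² for all x in the closed ball B_{2a/3}(x̄). -/
/-!
Subtracting the affine minorant `f x̄ + ⟨ȳ*, · - x̄⟩` from `f`, suppose the growth bound fails at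
`x` with `r = d(x, (∂f)⁻¹(ȳ*)) > 0`. Then `ȳ*` is a `c r²`-subgradient of `f` at `x`, and the
Brøndsted–Rockafellar theorem (Ekeland's principle on the tilted function, followed by a
separation argument in `X × ℝ`) yields `u` with `d(u, x) ≤ r/2` and `y* ∈ ∂f(u)` with
`‖y* - ȳ*‖ ≤ 2cr`. Subregularity at `u` gives `d(u, (∂f)⁻¹(ȳ*)) ≤ 2cκr < r/2`, contradicting
`r ≤ d(u, (∂f)⁻¹(ȳ*)) + d(u, x)`.
-/

open Topology Filter Metric Set

lemma EReal.le_add_coe_iff {a b : EReal} {s : ℝ} : a ≤ b + s ↔ a + ((-s : ℝ) : EReal) ≤ b := by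
  rw [← (EReal.addLECancellable_coe (-s)).add_le_add_iff_right, add_assoc, ← EReal.coe_add,
    add_neg_cancel, EReal.coe_zero, add_zero]

lemma exists_mem_forall_le_add {α : Type*} {G : α → ℝ} {s : Set α} (hs : s.Nonempty)
    (hG : BddBelow (range G)) {ε : ℝ} (hε : 0 < ε) : ∃ y ∈ s, ∀ z ∈ s, G y ≤ G z + ε := by
  have hbdd : BddBelow (G '' s) := hG.mono (image_subset_range G s)
  obtain ⟨_, ⟨y, hys, rfl⟩, hy⟩ := Real.lt_sInf_add_pos (hs.image G) hε
  exact ⟨y, hys, fun z hz => by linarith [csInf_le hbdd (mem_image_of_mem G hz)]⟩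

section Ekeland

variable {X : Type*} [MetricSpace X] {G : X → ℝ} {δ : ℝ} {x y : X}

def ekelandSet (G : X → ℝ) (δ : ℝ) (x : X) : Set X :=
  {z | G z + δ * dist z x ≤ G x}

lemma self_mem_ekelandSet : x ∈ ekelandSet G δ x := by
  simp [ekelandSet]

lemma ekelandSet_subset (hδ : 0 ≤ δ) (hy : y ∈ ekelandSet G δ x) :
    ekelandSet G δ y ⊆ ekelandSet G δ x := fun z hz => by
  simp only [ekelandSet, mem_ofPred_eq] at hy hz ⊢
  nlinarith [dist_triangle z y x]

lemma isClosed_ekelandSet (hG : LowerSemicontinuous G) :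
    IsClosed (ekelandSet G δ x) :=
  (hG.add ((continuous_id.dist continuous_const).const_mul δ).lowerSemicontinuous
    |>.isClosed_preimage (G x))

lemma ekelandSet_subset_closedBall {ε : ℝ} (hδ : 0 < δ)
    (hx : ∀ z ∈ ekelandSet G δ x, G x ≤ G z + ε) :
    ekelandSet G δ x ⊆ closedBall x (ε / δ) := fun z hz => by
  rw [mem_closedBall, le_div_iff₀ hδ]
  have := hx z hz
  simp only [ekelandSet, mem_ofPred_eq] at hz
  linarith

/-- Ekeland's variational principle. -/
theorem LowerSemicontinuous.exists_forall_le_add_dist [CompleteSpace X]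
    (hG : LowerSemicontinuous G) (hbdd : BddBelow (range G)) (hδ : 0 < δ) (x₀ : X) :
    ∃ u, G u + δ * dist u x₀ ≤ G x₀ ∧ ∀ z, G u ≤ G z + δ * dist z u := by
  -- `seq (n + 1)` is a `1 / (n + 1)`-minimiser of `G` on the Ekeland set of `seq n`, so these
  -- nested closed sets shrink to a single point `u`.
  choose next next_mem next_le using fun (x : X) (n : ℕ) =>
    exists_mem_forall_le_add ⟨x, self_mem_ekelandSet (G := G) (δ := δ)⟩ hbdd
      (Nat.one_div_pos_of_nat (n := n))
  let seq : ℕ → X := fun n => Nat.rec x₀ (fun k x => next x k) n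
  let S : ℕ → Set X := fun n => ekelandSet G δ (seq n)
  have hS : Antitone S := antitone_nat_of_succ_le fun n =>
    ekelandSet_subset hδ.le (next_mem (seq n) n)
  have hball : ∀ n, S (n + 1) ⊆ closedBall (seq (n + 1)) (1 / (n + 1) / δ) := fun n =>
    ekelandSet_subset_closedBall hδ fun z hz => next_le _ _ z (hS n.le_succ hz)
  have hdiam : ∀ n, diam (S (n + 1)) ≤ 2 * (1 / (n + 1) / δ) := fun n =>
    diam_le_of_subset_closedBall (by positivity) (hball n)
  have hdiam_lim : Tendsto (fun n => diam (S (n + 1))) atTop (𝓝 0) := by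
    have := (tendsto_one_div_add_atTop_nhds_zero_nat.div_const δ).const_mul 2
    rw [zero_div, mul_zero] at this
    exact squeeze_zero (fun n => diam_nonneg) hdiam this
  have hbounded : ∀ n, Bornology.IsBounded (S (n + 1)) := fun n =>
    isBounded_closedBall.subset (hball n)
  obtain ⟨u, hu⟩ := nonempty_iInter_of_nonempty_biInter
    (fun n => isClosed_ekelandSet hG) hbounded
    (fun N => ⟨seq (N + 1), mem_iInter₂.2 fun n hn =>
      hS (by omega : n + 1 ≤ N + 1) self_mem_ekelandSet⟩)
    hdiam_lim
  rw [mem_iInter] at hu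
  refine ⟨u, hS (Nat.zero_le 1) (hu 0), fun z => ?_⟩
  by_contra! hz
  have hzS : ∀ n, z ∈ S (n + 1) := fun n => ekelandSet_subset hδ.le (hu n) hz.le
  have hzu : dist z u ≤ 0 := ge_of_tendsto' hdiam_lim fun n =>
    dist_le_diam_of_mem (hbounded n) (hzS n) (hu n)
  rw [dist_le_zero.1 hzu] at hz
  simp at hz

theorem LowerSemicontinuous.exists_forall_le_add_dist_ereal [CompleteSpace X] {g : X → EReal}
    (hg : LowerSemicontinuous g) {m : ℝ} (hm : ∀ z, (m : EReal) ≤ g z) (hδ : 0 < δ) {x₀ : X}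
    (hx₀ : g x₀ ≠ ⊤) :
    ∃ u, g u + ((δ * dist u x₀ : ℝ) : EReal) ≤ g x₀ ∧
      ∀ z, g u ≤ g z + ((δ * dist z u : ℝ) : EReal) := by
  obtain ⟨M, hM⟩ : ∃ M : ℝ, g x₀ = M :=
    ⟨_, (EReal.coe_toReal hx₀ (ne_bot_of_le_ne_bot (EReal.coe_ne_bot m) (hm x₀))).symm⟩
  -- truncating above `g x₀` makes `G` real-valued without changing the relevant inequalities
  set T : ℝ := M + 1
  set G : X → ℝ := fun z => (min (g z) T).toReal
  have hG : ∀ z, (G z : EReal) = min (g z) T := fun z =>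
    EReal.coe_toReal (ne_top_of_le_ne_top (EReal.coe_ne_top T) (min_le_right _ _))
      (lt_min ((EReal.bot_lt_coe m).trans_le (hm z)) (EReal.bot_lt_coe T)).ne'
  have hG_lsc : LowerSemicontinuous G := lowerSemicontinuous_iff_isClosed_preimage.2 fun y => by
    have : G ⁻¹' Iic y = (fun z => min (g z) T) ⁻¹' Iic (y : EReal) := by
      ext z; simp only [mem_preimage, mem_Iic, ← hG, EReal.coe_le_coe_iff]
    rw [this]
    exact (hg.inf lowerSemicontinuous_const).isClosed_preimage _
  have hG_bdd : BddBelow (range G) := ⟨min m T, by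
    rintro _ ⟨z, rfl⟩
    rw [← EReal.coe_le_coe_iff, hG]
    exact le_min ((EReal.coe_le_coe_iff.2 (min_le_left m T)).trans (hm z))
      (EReal.coe_le_coe_iff.2 (min_le_right m T))⟩
  obtain ⟨u, hu₀, hu⟩ := hG_lsc.exists_forall_le_add_dist hG_bdd hδ x₀
  have hGx₀ : G x₀ = M := by
    rw [← EReal.coe_eq_coe_iff, hG, hM, min_eq_left (by norm_cast; linarith)]
  have hGu : G u < T := by nlinarith [dist_nonneg (x := u) (y := x₀)]
  have hgu : g u = G u := by
    rw [hG, eq_comm, min_eq_left_iff]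
    have : min (g u) T < T := by rw [← hG]; exact_mod_cast hGu
    exact (min_lt_iff.1 this).resolve_right (lt_irrefl _) |>.le
  refine ⟨u, ?_, fun z => ?_⟩
  · rw [hgu, hM, ← EReal.coe_add, ← hGx₀]
    exact_mod_cast hu₀
  · rcases le_total (g z) T with hz | hz
    · have hgz : g z = G z := by rw [hG, min_eq_left hz]
      rw [hgu, hgz, ← EReal.coe_add]
      exact_mod_cast hu z
    · calc g u ≤ T := by rw [hgu]; exact_mod_cast hGu.le
        _ ≤ g z := hz
        _ ≤ g z + ((δ * dist z u : ℝ) : EReal) :=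
          le_add_of_nonneg_right (by exact_mod_cast (by positivity))

end Ekeland

theorem ConcaveOn.exists_affine_between {X : Type*} [AddCommGroup X] [TopologicalSpace X]
    [IsTopologicalAddGroup X] [Module ℝ X] [ContinuousSMul ℝ X] {φ : X → ℝ}
    (hφ : ConcaveOn ℝ univ φ) (hφc : Continuous φ) {t : Set (X × ℝ)} (ht : Convex ℝ t)
    (hφt : ∀ p ∈ t, φ p.1 ≤ p.2) {u : X} (hu : (u, φ u) ∈ t) :
    ∃ y : X →L[ℝ] ℝ, (∀ z, φ z ≤ φ u + y (z - u)) ∧ ∀ p ∈ t, φ u + y (p.1 - u) ≤ p.2 := by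
  let s : Set (X × ℝ) := {p | p.1 ∈ univ ∧ p.2 < φ p.1}
  have hs_open : IsOpen s := by
    simp only [s, mem_univ, true_and]
    exact isOpen_lt continuous_snd (hφc.comp continuous_fst)
  have hdisj : Disjoint s t := disjoint_left.2 fun p hps hpt => (hφt p hpt).not_gt hps.2
  obtain ⟨Φ, α, hΦs, hΦt⟩ :=
    geometric_hahn_banach_open hφ.convex_strict_hypograph hs_open ht hdisj
  set ℓ := Φ.comp (ContinuousLinearMap.inl ℝ X ℝ)
  set β := Φ (0, 1)
  have hΦ : ∀ z r, Φ (z, r) = ℓ z + β * r := fun z r => by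
    rw [show (z, r) = (z, 0) + r • ((0 : X), (1 : ℝ)) by simp, map_add, map_smul, smul_eq_mul,
      mul_comm]
    rfl
  have hs_mem : ∀ z r, r < φ z → Φ (z, r) < α := fun z r h => hΦs _ ⟨mem_univ z, h⟩
  have hα : α ≤ ℓ u + β * φ u := hΦ u (φ u) ▸ hΦt _ hu
  -- the separating hyperplane is not vertical, as `(u, φ u - 1) ∈ s` and `(u, φ u) ∈ t`
  have hβ : 0 < β := by
    have := hs_mem u (φ u - 1) (by linarith)
    rw [hΦ] at this
    linarith
  have hφα : ∀ z, ℓ z + β * φ z ≤ α := fun z => le_of_forall_pos_lt_add fun ε hε => by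
    have := hs_mem z (φ z - ε / β) (by linarith [div_pos hε hβ])
    rw [hΦ, mul_sub, mul_div_cancel₀ _ hβ.ne'] at this
    linarith
  have hy : ∀ v, β * (-β⁻¹ • ℓ) v = -ℓ v := fun v => by
    simp [mul_inv_cancel_left₀ hβ.ne']
  refine ⟨-β⁻¹ • ℓ, fun z => le_of_mul_le_mul_left ?_ hβ, fun p hp => le_of_mul_le_mul_left ?_ hβ⟩
  · rw [mul_add, hy, map_sub]
    linarith [hφα z]
  · rw [mul_add, hy, map_sub]
    linarith [hφα u, hΦ p.1 p.2 ▸ hΦt p hp]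

lemma convex_epigraph_ereal {X : Type*} [AddCommGroup X] [Module ℝ X] {f : X → EReal}
    (hconv : ∀ x y : X, ∀ a b : ℝ, 0 ≤ a → 0 ≤ b → a + b = 1 →
      f (a • x + b • y) ≤ (a : EReal) * f x + (b : EReal) * f y) :
    Convex ℝ {p : X × ℝ | f p.1 ≤ p.2} := by
  intro p hp q hq a b ha hb hab
  calc f (a • p.1 + b • q.1) ≤ (a : EReal) * f p.1 + (b : EReal) * f q.1 := hconv _ _ _ _ ha hb hab
    _ ≤ (a : EReal) * p.2 + (b : EReal) * q.2 :=
      add_le_add (mul_le_mul_of_nonneg_left hp (by exact_mod_cast ha))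
        (mul_le_mul_of_nonneg_left hq (by exact_mod_cast hb))
    _ = ((a • p + b • q).2 : ℝ) := by simp

lemma ContinuousLinearMap.norm_le_of_forall_le {X : Type*} [SeminormedAddCommGroup X]
    [NormedSpace ℝ X] {ℓ : X →L[ℝ] ℝ} {δ : ℝ} (hδ : 0 ≤ δ) (h : ∀ v, ℓ v ≤ δ * ‖v‖) :
    ‖ℓ‖ ≤ δ :=
  ℓ.opNorm_le_bound hδ fun v => abs_le.2
    ⟨by linarith [map_neg ℓ v ▸ norm_neg v ▸ h (-v)], h v⟩

theorem exists_mem_subdiff_norm_sub_le {X : Type*} [NormedAddCommGroup X] [NormedSpace ℝ X]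
    {f : X → EReal}
    (hconv : ∀ x y : X, ∀ a b : ℝ, 0 ≤ a → 0 ≤ b → a + b = 1 →
      f (a • x + b • y) ≤ (a : EReal) * f x + (b : EReal) * f y)
    {u : X} (hu : f u ≠ ⊤) (y₀ : X →L[ℝ] ℝ) {δ : ℝ} (hδ : 0 ≤ δ)
    (h : ∀ z, f u + ((y₀ (z - u) - δ * ‖z - u‖ : ℝ) : EReal) ≤ f z) :
    ∃ y ∈ subdiff f u, ‖y - y₀‖ ≤ δ := by
  induction hfu : f u using EReal.rec with
  | bot => exact ⟨y₀, ⟨hu, fun z => by simp [hfu]⟩, by simpa using hδ⟩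
  | top => exact absurd hfu hu
  | coe fu =>
  let φ : X → ℝ := fun z => fu + y₀ (z - u) - δ * ‖z - u‖
  have hφ_concave : ConcaveOn ℝ univ φ := by
    have hnorm : ConvexOn ℝ univ fun z : X => δ * ‖z - u‖ :=
      ((convexOn_norm convex_univ).translate_right (-u)).smul hδ |>.congr fun z _ => by
        simp [sub_eq_neg_add]
    have haffine : ConcaveOn ℝ univ fun z : X => fu + y₀ (z - u) :=
      (concaveOn_const fu convex_univ).add
        ((y₀.toLinearMap.concaveOn convex_univ).translate_right (-u)) |>.congr fun z _ => by
          simp [sub_eq_neg_add]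
    exact haffine.sub hnorm
  have hφ_le : ∀ p ∈ {p : X × ℝ | f p.1 ≤ p.2}, φ p.1 ≤ p.2 := fun p hp => by
    have := (h p.1).trans hp
    rw [hfu, ← EReal.coe_add, EReal.coe_le_coe_iff] at this
    linarith
  obtain ⟨y, hyφ, hy_epi⟩ := hφ_concave.exists_affine_between (by fun_prop)
    (convex_epigraph_ereal hconv) hφ_le (u := u) (by simp [φ, hfu])
  have hφu : φ u = fu := by simp [φ]
  refine ⟨y, ⟨hu, fun z => ?_⟩, ?_⟩
  · rw [hfu]
    by_cases hz : f z = ⊤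
    · simp [hz]
    have hz_bot : f z ≠ ⊥ := ne_bot_of_le_ne_bot
      (by rw [hfu, ← EReal.coe_add]; exact EReal.coe_ne_bot _) (h z)
    have := hy_epi (z, (f z).toReal) (by simp [EReal.coe_toReal hz hz_bot])
    rw [← EReal.coe_toReal hz hz_bot, ← EReal.coe_add]
    exact_mod_cast hφu ▸ this
  · rw [norm_sub_rev]
    refine ContinuousLinearMap.norm_le_of_forall_le hδ fun v => ?_
    have := hyφ (u + v)
    simp only [φ, add_sub_cancel_left, sub_self, norm_zero, mul_zero, sub_zero, map_zero,
      add_zero] at this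
    rw [sub_apply]
    linarith

/-- The Brøndsted–Rockafellar theorem. -/
theorem exists_mem_subdiff_of_forall_le_add {X : Type*} [NormedAddCommGroup X]
    [NormedSpace ℝ X] [CompleteSpace X] {f : X → EReal} (hlsc : LowerSemicontinuous f)
    (hconv : ∀ x y : X, ∀ a b : ℝ, 0 ≤ a → 0 ≤ b → a + b = 1 →
      f (a • x + b • y) ≤ (a : EReal) * f x + (b : EReal) * f y)
    {x : X} (hx : f x ≠ ⊤) (y₀ : X →L[ℝ] ℝ) {ε lam : ℝ} (hε : 0 < ε) (hlam : 0 < lam)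
    (h : ∀ z, f x + ((y₀ (z - x) - ε : ℝ) : EReal) ≤ f z) :
    ∃ u, dist u x ≤ lam ∧ ∃ y ∈ subdiff f u, ‖y - y₀‖ ≤ ε / lam := by
  induction hfx : f x using EReal.rec with
  | bot => exact ⟨x, by simpa using hlam.le, y₀, ⟨hx, fun z => by simp [hfx]⟩,
    by rw [sub_self, norm_zero]; positivity⟩
  | top => exact absurd hfx hx
  | coe fx =>
  let g : X → EReal := fun z => f z + ((-y₀ (z - x) : ℝ) : EReal)
  have hg_lsc : LowerSemicontinuous g :=
    hlsc.add' (continuous_coe_real_ereal.comp (by fun_prop)).lowerSemicontinuous fun z =>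
      EReal.continuousAt_add (Or.inr (EReal.coe_ne_bot _)) (Or.inr (EReal.coe_ne_top _))
  have hg_ge : ∀ z, ((fx - ε : ℝ) : EReal) ≤ g z := fun z => by
    rw [EReal.le_add_coe_iff, ← EReal.coe_add, neg_neg]
    convert h z using 1
    rw [hfx, ← EReal.coe_add]
    ring_nf
  have hgx : g x = fx := by simp [g, hfx]
  obtain ⟨u, hux, hu⟩ := hg_lsc.exists_forall_le_add_dist_ereal hg_ge (div_pos hε hlam)
    (hgx ▸ EReal.coe_ne_top fx)
  have hgu_le : g u ≤ fx := (le_add_of_nonneg_right (by exact_mod_cast (by positivity))).trans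
    (hgx ▸ hux)
  refine ⟨u, ?_, exists_mem_subdiff_norm_sub_le hconv ?_ y₀ (div_pos hε hlam).le fun z => ?_⟩
  · have := (add_le_add (hg_ge u) le_rfl).trans (hgx ▸ hux)
    rw [← EReal.coe_add, EReal.coe_le_coe_iff] at this
    refine le_of_mul_le_mul_left ?_ hε
    have : ε / lam * dist u x ≤ ε := by linarith
    rwa [div_mul_eq_mul_div, div_le_iff₀ hlam] at this
  · intro hfu
    have hgu : g u = ⊤ := by simp only [g, hfu, EReal.top_add_coe]
    exact EReal.coe_ne_top fx (top_le_iff.1 (hgu ▸ hgu_le))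
  · have := hu z
    rw [add_assoc, ← EReal.coe_add, EReal.le_add_coe_iff, add_assoc, ← EReal.coe_add] at this
    convert this using 3
    simp only [dist_eq_norm, map_sub]
    ring

theorem stmt_1_general {X : Type*} [NormedAddCommGroup X] [NormedSpace ℝ X] [CompleteSpace X]
    (f : X → EReal)
    (hne_bot : ∀ x, f x ≠ ⊥)
    (hlsc : LowerSemicontinuous f)
    (hconv : ∀ x y : X, ∀ a b : ℝ, 0 ≤ a → 0 ≤ b → a + b = 1 →
      f (a • x + b • y) ≤ (a : EReal) * f x + (b : EReal) * f y)
    (xbar : X) (ybar : X →L[ℝ] ℝ) (hybar : ybar ∈ subdiff f xbar)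
    (κ a : ℝ) (hκ : 0 < κ)
    (hsubreg : ∀ x ∈ closedBall xbar a, ∀ y ∈ subdiff f x,
      infDist x {z | ybar ∈ subdiff f z} ≤ κ * ‖y - ybar‖) :
    ∀ c : ℝ, 0 < c → c < 1 / (4 * κ) →
      ∀ x ∈ closedBall xbar (2 * a / 3),
        f xbar + ((ybar (x - xbar) + c * (infDist x {z | ybar ∈ subdiff f z}) ^ 2 : ℝ) : EReal)
          ≤ f x := by
  intro c hc hcκ x hx
  set S := {z | ybar ∈ subdiff f z}
  set r := infDist x S
  obtain ⟨Fb, hFb⟩ : ∃ Fb : ℝ, f xbar = Fb :=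
    ⟨_, (EReal.coe_toReal hybar.1 (hne_bot xbar)).symm⟩
  have hminor : ∀ z, ((Fb + ybar (z - xbar) : ℝ) : EReal) ≤ f z := fun z => by
    simpa only [hFb, EReal.coe_add] using hybar.2 z
  rw [hFb, ← EReal.coe_add, ← add_assoc]
  by_contra! hlt
  have hr : 0 < r := by
    by_contra! hr
    have hr0 : r = 0 := le_antisymm hr infDist_nonneg
    rw [hr0, zero_pow two_ne_zero, mul_zero, add_zero] at hlt
    exact (hminor x).not_gt hlt
  -- `ybar` is a `c r²`-subgradient of `f` at `x`
  have hε : ∀ z, f x + ((ybar (z - x) - c * r ^ 2 : ℝ) : EReal) ≤ f z := fun z => by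
    refine (add_le_add hlt.le le_rfl).trans (le_of_eq_of_le ?_ (hminor z))
    rw [← EReal.coe_add]
    congr 1
    simp only [map_sub]
    ring
  obtain ⟨u, hux, y, hy, hyδ⟩ := exists_mem_subdiff_of_forall_le_add hlsc hconv
    (hlt.trans (EReal.coe_lt_top _)).ne ybar (by positivity) (half_pos hr) hε
  have hr_le : r ≤ 2 * a / 3 :=
    (infDist_le_dist_of_mem (show xbar ∈ S from hybar)).trans (mem_closedBall.1 hx)
  have hu_ball : u ∈ closedBall xbar a := by
    rw [mem_closedBall]
    linarith [dist_triangle u x xbar, mem_closedBall.1 hx]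
  have hyδ' : ‖y - ybar‖ ≤ 2 * c * r := by
    rwa [show c * r ^ 2 / (r / 2) = 2 * c * r by field_simp] at hyδ
  have hu_S : infDist u S ≤ κ * (2 * c * r) :=
    (hsubreg u hu_ball y hy).trans (mul_le_mul_of_nonneg_left hyδ' hκ.le)
  have hcκ' : c * (4 * κ) < 1 := (lt_div_iff₀ (by positivity)).1 hcκ
  have hx_S : r ≤ infDist u S + dist u x := dist_comm x u ▸ infDist_le_infDist_add_dist
  nlinarith

/-- If `f ∈ Γ(X)` on a Banach space, `ȳ* ∈ ∂f(x̄)`, and `∂f` is metrically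
subregular at `x̄` for `ȳ*` with constant `κ` on the closed ball `B_a(x̄)`
(i.e. `d(x, (∂f)⁻¹(ȳ*)) ≤ κ·d(ȳ*, ∂f(x))`, stated pointwise over `y* ∈ ∂f(x)`), then
for every `0 < c < 1/(4κ)` the quadratic growth condition
`f(x) ≥ f(x̄) + ⟨ȳ*, x - x̄⟩ + c·d(x, (∂f)⁻¹(ȳ*))²` holds on the closed ball `B_{2a/3}(x̄)`. -/
theorem stmt_1 {X : Type*} [NormedAddCommGroup X] [NormedSpace ℝ X] [CompleteSpace X]
    (f : X → EReal)
    (hproper : ∃ x, f x ≠ ⊤) (hne_bot : ∀ x, f x ≠ ⊥)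
    (hlsc : LowerSemicontinuous f)
    (hconv : ∀ x y : X, ∀ a b : ℝ, 0 ≤ a → 0 ≤ b → a + b = 1 →
      f (a • x + b • y) ≤ (a : EReal) * f x + (b : EReal) * f y)
    (xbar : X) (ybar : X →L[ℝ] ℝ) (hybar : ybar ∈ subdiff f xbar)
    (κ a : ℝ) (hκ : 0 < κ) (ha : 0 < a)
    (hsubreg : ∀ x ∈ closedBall xbar a, ∀ y ∈ subdiff f x,
      infDist x {z | ybar ∈ subdiff f z} ≤ κ * ‖y - ybar‖) :
    ∀ c : ℝ, 0 < c → c < 1 / (4 * κ) →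
      ∀ x ∈ closedBall xbar (2 * a / 3),
        f xbar + ((ybar (x - xbar) + c * (infDist x {z | ybar ∈ subdiff f z}) ^ 2 : ℝ) : EReal)
          ≤ f x :=
  stmt_1_general f hne_bot hlsc hconv xbar ybar hybar κ a hκ hsubreg
end

section
/- Let X be a real Banach space and let f : X → ℝ ∪ {∞} be a proper lower semicontinuous function (not necessarily convex). Let x̄ ∈ X and ȳ* ∈ X* with ȳ* ∈ ∂f(x̄), where ∂f denotes the convex subdifferential. Suppose there exist a neighborhood U of x̄ and a constant c > 0 such that f(x) ≥ f(x̄) + ⟨ȳ*, x − x̄⟩ + c·d(x, (∂f)⁻¹(ȳ*))² for all x ∈ U. Then d(x, (∂f)⁻¹(ȳ*)) ≤ (1/c)·d(ȳ*, ∂f(x)) for all x ∈ U; that is, ∂f is metrically subregular at x̄ for ȳ* with constant 1/c. -/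
/-!
For `z` with `ȳ ∈ ∂f(z)`, adding the growth inequality at `x` to the subgradient inequalities
of `y` at `x` and of `ȳ` at `z` telescopes around the cycle `x̄ → x → z → x̄` to
`c·d(x, S)² ≤ ⟨y - ȳ, x - z⟩ ≤ ‖y - ȳ‖·‖x - z‖`, where `S = (∂f)⁻¹(ȳ)`. Taking the infimum over
`z ∈ S` gives `c·d(x, S)² ≤ ‖y - ȳ‖·d(x, S)`, and dividing by `c·d(x, S)` finishes.
-/

open Topology Filter Metric Set

section Subdiff

variable {X : Type*} [NormedAddCommGroup X] [NormedSpace ℝ X] {f : X → EReal} {x : X}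

theorem mem_subdiff_of_eq_bot (hx : f x = ⊥) (p : X →L[ℝ] ℝ) : p ∈ subdiff f x :=
  ⟨hx ▸ bot_ne_top, fun z => by simp [hx]⟩

theorem le_sub_apply_of_mem_subdiff {xbar z : X} {y ybar : X →L[ℝ] ℝ} {r : ℝ}
    (hx : f x ≠ ⊥) (hy : y ∈ subdiff f x) (hz : ybar ∈ subdiff f z)
    (hgrowth : f xbar + ((ybar (x - xbar) + r : ℝ) : EReal) ≤ f x) :
    r ≤ (y - ybar) (x - z) := by
  lift f x to ℝ using ⟨hy.1, hx⟩ with B hB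
  have hcycle : ((B + y (z - x) + ybar (xbar - z) + (ybar (x - xbar) + r) : ℝ) : EReal) ≤ B := by
    calc ((B + y (z - x) + ybar (xbar - z) + (ybar (x - xbar) + r) : ℝ) : EReal)
        = B + y (z - x) + ybar (xbar - z) + ((ybar (x - xbar) + r : ℝ) : EReal) := by
          simp only [EReal.coe_add]
      _ ≤ f z + ybar (xbar - z) + ((ybar (x - xbar) + r : ℝ) : EReal) := by
          gcongr
          exact hB ▸ hy.2 z
      _ ≤ f xbar + ((ybar (x - xbar) + r : ℝ) : EReal) := by
          gcongr
          exact hz.2 xbar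
      _ ≤ B := hB ▸ hgrowth
  have hsum : ybar (z - x) + ybar (xbar - z) + ybar (x - xbar) = 0 := by
    rw [← map_add, ← map_add, sub_add_sub_cancel', sub_add_sub_cancel, sub_self, map_zero]
  have := EReal.coe_le_coe_iff.1 hcycle
  simp only [sub_apply, ← neg_sub z x, map_neg]
  linarith

end Subdiff

theorem Metric.le_mul_infDist {α : Type*} [PseudoMetricSpace α] {s : Set α} {x : α} {a K : ℝ}
    (hs : s.Nonempty) (hK : 0 ≤ K) (h : ∀ z ∈ s, a ≤ K * dist x z) : a ≤ K * infDist x s := by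
  by_contra! hlt
  obtain ⟨z, hz⟩ := hs
  rcases hK.eq_or_lt with rfl | hK
  · simpa using hlt.trans_le (h z hz)
  obtain ⟨w, hw, hdist⟩ := (infDist_lt_iff ⟨z, hz⟩).1 ((lt_div_iff₀' hK).2 hlt)
  exact (h w hw).not_gt ((lt_div_iff₀' hK).1 hdist)

theorem stmt_2_general {X : Type*} [NormedAddCommGroup X] [NormedSpace ℝ X]
    (f : X → EReal)
    (xbar : X) (ybar : X →L[ℝ] ℝ)
    (U : Set X) (c : ℝ) (hc : 0 < c)
    (growth : ∀ x ∈ U,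
      f xbar + ((ybar (x - xbar) + c * (infDist x {z | ybar ∈ subdiff f z}) ^ 2 : ℝ) : EReal)
        ≤ f x) :
    ∀ x ∈ U, ∀ y ∈ subdiff f x,
      infDist x {z | ybar ∈ subdiff f z} ≤ (1 / c) * ‖y - ybar‖ := by
  intro x hx y hy
  set S := {z | ybar ∈ subdiff f z}
  by_cases hbot : f x = ⊥
  · rw [infDist_zero_of_mem (show x ∈ S from mem_subdiff_of_eq_bot hbot ybar)]
    positivity
  rcases S.eq_empty_or_nonempty with hS | hS
  · rw [hS, infDist_empty]
    positivity
  have hbound : ∀ z ∈ S, c * infDist x S ^ 2 ≤ ‖y - ybar‖ * dist x z := fun z hz =>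
    calc c * infDist x S ^ 2 ≤ (y - ybar) (x - z) :=
          le_sub_apply_of_mem_subdiff hbot hy hz (growth x hx)
      _ ≤ ‖y - ybar‖ * dist x z :=
          dist_eq_norm x z ▸ (le_abs_self _).trans ((y - ybar).le_opNorm _)
  have hquad := le_mul_infDist hS (norm_nonneg _) hbound
  rcases (infDist_nonneg (x := x) (s := S)).eq_or_lt with hd | hd
  · rw [← hd]
    positivity
  · rw [one_div_mul_eq_div, le_div_iff₀ hc]
    nlinarith

/-- Let `f` be a proper lower semicontinuous (not necessarily convex) function
on a Banach space `X`, and let `ȳ* ∈ ∂f(x̄)` (convex subdifferential). If the quadratic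
growth condition `f(x) ≥ f(x̄) + ⟨ȳ*, x - x̄⟩ + c·d(x, (∂f)⁻¹(ȳ*))²` holds on a neighborhood
`U` of `x̄`, then `d(x, (∂f)⁻¹(ȳ*)) ≤ (1/c)·d(ȳ*, ∂f(x))` for all `x ∈ U` (stated pointwise
over `y* ∈ ∂f(x)`, matching the convention `d(ȳ*, ∅) = ∞`), i.e. `∂f` is metrically
subregular at `x̄` for `ȳ*` with constant `1/c`. -/
theorem stmt_2 {X : Type*} [NormedAddCommGroup X] [NormedSpace ℝ X] [CompleteSpace X]
    (f : X → EReal)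
    (hproper : ∃ x, f x ≠ ⊤) (hne_bot : ∀ x, f x ≠ ⊥)
    (hlsc : LowerSemicontinuous f)
    (xbar : X) (ybar : X →L[ℝ] ℝ) (hybar : ybar ∈ subdiff f xbar)
    (U : Set X) (hU : U ∈ 𝓝 xbar) (c : ℝ) (hc : 0 < c)
    (growth : ∀ x ∈ U,
      f xbar + ((ybar (x - xbar) + c * (infDist x {z | ybar ∈ subdiff f z}) ^ 2 : ℝ) : EReal)
        ≤ f x) :
    ∀ x ∈ U, ∀ y ∈ subdiff f x,
      infDist x {z | ybar ∈ subdiff f z} ≤ (1 / c) * ‖y - ybar‖ :=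
  stmt_2_general f xbar ybar U c hc growth
end

section
/- Let X be a real Banach space, let f ∈ Γ(X), and let x̄ ∈ X, ȳ* ∈ X* with ȳ* ∈ ∂f(x̄). Suppose there exist a neighborhood U of x̄ and a constant c > 0 such that f(x) ≥ f(x̄) + ⟨ȳ*, x − x̄⟩ + c·‖x − x̄‖² for all x ∈ U. Then ∂f is strongly metrically subregular at x̄ for ȳ* with constant 1/c: there is a neighborhood U' of x̄ such that ‖x − x̄‖ ≤ (1/c)·d(ȳ*, ∂f(x)) for all x ∈ U'. -/
open Topology Filter Metric Set

/-!
Adding the quadratic growth inequality at `x` to the subgradient inequality of `y ∈ ∂f(x)`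
tested at `x̄` cancels the values of `f` and leaves `c‖x - x̄‖² ≤ ⟨y - ȳ*, x - x̄⟩`; bounding the
right-hand side by `‖y - ȳ*‖ ‖x - x̄‖` and dividing by `c ‖x - x̄‖` gives the estimate.
-/

section

variable {X : Type*} [NormedAddCommGroup X] [NormedSpace ℝ X]

theorem ContinuousLinearMap.norm_le_one_div_mul_opNorm_of_mul_norm_sq_le
    (φ : X →L[ℝ] ℝ) (v : X) {c : ℝ} (hc : 0 < c) (h : c * ‖v‖ ^ 2 ≤ φ v) :
    ‖v‖ ≤ 1 / c * ‖φ‖ := by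
  have hφ : φ v ≤ ‖φ‖ * ‖v‖ := (Real.le_norm_self _).trans (φ.le_opNorm v)
  rcases (norm_nonneg v).eq_or_lt with hv | hv
  · rw [← hv]
    positivity
  · rw [div_mul_eq_mul_div, le_div_iff₀ hc]
    nlinarith

theorem mul_norm_sub_sq_le_of_mem_subdiff {f : X → EReal} {x xbar : X}
    {y ybar : X →L[ℝ] ℝ} {c : ℝ} (hxbar_top : f xbar ≠ ⊤) (hxbar_bot : f xbar ≠ ⊥)
    (hy : y ∈ subdiff f x)
    (hgrowth : f xbar + ((ybar (x - xbar) + c * ‖x - xbar‖ ^ 2 : ℝ) : EReal) ≤ f x) :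
    c * ‖x - xbar‖ ^ 2 ≤ (y - ybar) (x - xbar) := by
  lift f xbar to ℝ using ⟨hxbar_top, hxbar_bot⟩ with b hb
  rw [← EReal.coe_add] at hgrowth
  have hx_bot : f x ≠ ⊥ := ne_bot_of_le_ne_bot (EReal.coe_ne_bot _) hgrowth
  lift f x to ℝ using ⟨hy.1, hx_bot⟩ with a ha
  have hsub := hy.2 xbar
  rw [← ha, ← hb, ← EReal.coe_add, EReal.coe_le_coe_iff] at hsub
  rw [EReal.coe_le_coe_iff] at hgrowth
  rw [← neg_sub, map_neg] at hsub
  rw [sub_apply]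
  linarith

end

theorem stmt_3_general {X : Type*} [NormedAddCommGroup X] [NormedSpace ℝ X]
    (f : X → EReal)
    (hne_bot : ∀ x, f x ≠ ⊥)
    (xbar : X) (ybar : X →L[ℝ] ℝ) (hybar : ybar ∈ subdiff f xbar)
    (U : Set X) (hU : U ∈ 𝓝 xbar) (c : ℝ) (hc : 0 < c)
    (growth : ∀ x ∈ U,
      f xbar + ((ybar (x - xbar) + c * ‖x - xbar‖ ^ 2 : ℝ) : EReal) ≤ f x) :
    ∃ U' ∈ 𝓝 xbar, ∀ x ∈ U', ∀ y ∈ subdiff f x,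
      ‖x - xbar‖ ≤ (1 / c) * ‖y - ybar‖ :=
  ⟨U, hU, fun x hx y hy => (y - ybar).norm_le_one_div_mul_opNorm_of_mul_norm_sq_le _ hc
    (mul_norm_sub_sq_le_of_mem_subdiff hybar.1 (hne_bot xbar) hy (growth x hx))⟩

/-- If `f ∈ Γ(X)` on a Banach space, `ȳ* ∈ ∂f(x̄)`, and the quadratic growth
condition `f(x) ≥ f(x̄) + ⟨ȳ*, x - x̄⟩ + c·‖x - x̄‖²` holds on a neighborhood `U` of `x̄`,
then `∂f` is strongly metrically subregular at `x̄` for `ȳ*` with constant `1/c`: there is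
a neighborhood `U'` of `x̄` with `‖x - x̄‖ ≤ (1/c)·d(ȳ*, ∂f(x))` for all `x ∈ U'` (stated
pointwise over `y* ∈ ∂f(x)`, matching the convention `d(ȳ*, ∅) = ∞`). -/
theorem stmt_3 {X : Type*} [NormedAddCommGroup X] [NormedSpace ℝ X] [CompleteSpace X]
    (f : X → EReal)
    (hproper : ∃ x, f x ≠ ⊤) (hne_bot : ∀ x, f x ≠ ⊥)
    (hlsc : LowerSemicontinuous f)
    (hconv : ∀ x y : X, ∀ a b : ℝ, 0 ≤ a → 0 ≤ b → a + b = 1 →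
      f (a • x + b • y) ≤ (a : EReal) * f x + (b : EReal) * f y)
    (xbar : X) (ybar : X →L[ℝ] ℝ) (hybar : ybar ∈ subdiff f xbar)
    (U : Set X) (hU : U ∈ 𝓝 xbar) (c : ℝ) (hc : 0 < c)
    (growth : ∀ x ∈ U,
      f xbar + ((ybar (x - xbar) + c * ‖x - xbar‖ ^ 2 : ℝ) : EReal) ≤ f x) :
    ∃ U' ∈ 𝓝 xbar, ∀ x ∈ U', ∀ y ∈ subdiff f x,
      ‖x - xbar‖ ≤ (1 / c) * ‖y - ybar‖ :=
  stmt_3_general f hne_bot xbar ybar hybar U hU c hc growth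
end

section
/- Let X be a real Banach space, let f ∈ Γ(X), and let x̄ ∈ X, ȳ* ∈ X* with ȳ* ∈ ∂f(x̄). Suppose ∂f is strongly metrically subregular at x̄ for ȳ* with constant κ > 0, i.e., there is a neighborhood U of x̄ such that ‖x − x̄‖ ≤ κ·d(ȳ*, ∂f(x)) for all x ∈ U. Then for every constant c with 0 < c < 1/(4κ) there exists a neighborhood U' of x̄ such that f(x) ≥ f(x̄) + ⟨ȳ*, x − x̄⟩ + c·‖x − x̄‖² for all x ∈ U'. -/
open Topology Filter Metric Set

section Ekeland

variable {X : Type*} [PseudoMetricSpace X] {G : X → ℝ} {r : ℝ}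

lemma le_add_dist_trans (hr : 0 ≤ r) {x y z : X} (hxy : G x + r * dist x y ≤ G y)
    (hyz : G y + r * dist y z ≤ G z) : G x + r * dist x z ≤ G z := by
  nlinarith [dist_triangle x y z]

lemma cauchySeq_of_add_dist_le (hr : 0 < r) {x : ℕ → X} (hbdd : BddBelow (range (G ∘ x)))
    (hx : ∀ n k, n ≤ k → G (x k) + r * dist (x k) (x n) ≤ G (x n)) : CauchySeq x := by
  have hanti : Antitone (G ∘ x) := fun n k hnk => by
    show G (x k) ≤ G (x n)
    nlinarith [hx n k hnk, dist_nonneg (x := x k) (y := x n)]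
  set L := ⨅ i, (G ∘ x) i
  have hlim : Tendsto (G ∘ x) atTop (𝓝 L) := tendsto_atTop_ciInf hanti hbdd
  refine Metric.cauchySeq_iff'.2 fun ε hε => ?_
  obtain ⟨N, hN⟩ :=
    (hlim.eventually (gt_mem_nhds (lt_add_of_pos_right L (mul_pos hr hε)))).exists
  refine ⟨N, fun n hn => lt_of_mul_lt_mul_left ?_ hr.le⟩
  have hLn : L ≤ G (x n) := ciInf_le hbdd n
  have hN' : G (x N) < L + r * ε := hN
  linarith [hx N n hn]

/-- Ekeland's variational principle. -/
theorem exists_le_add_dist_forall_le_add_dist [CompleteSpace X] (hG : LowerSemicontinuous G)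
    (hbdd : BddBelow (range G)) (hr : 0 < r) (v : X) :
    ∃ u, G u + r * dist u v ≤ G v ∧ ∀ z, G u ≤ G z + r * dist z u := by
  set S : X → Set X := fun w => {z | G z + r * dist z w ≤ G w}
  have hS_closed : ∀ w, IsClosed (S w) := fun w =>
    (hG.add (continuous_const.mul (continuous_id.dist continuous_const)).lowerSemicontinuous)
      |>.isClosed_preimage (G w)
  have hS_self : ∀ w, w ∈ S w := fun w => by simp [S]
  have hnext : ∀ w (n : ℕ), ∃ z ∈ S w, G z ≤ sInf (G '' S w) + (1 / 2) ^ n := by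
    intro w n
    obtain ⟨_, ⟨z, hz, rfl⟩, hlt⟩ := Real.lt_sInf_add_pos ⟨_, mem_image_of_mem G (hS_self w)⟩
      (show (0 : ℝ) < (1 / 2) ^ n by positivity)
    exact ⟨z, hz, hlt.le⟩
  choose next hnext_mem hnext_le using hnext
  -- `seq (n + 1)` is a `2⁻ⁿ`-minimizer of `G` on `S (seq n)`
  let seq : ℕ → X := fun n => Nat.rec v (fun n w => next w n) n
  have hseq_mem : ∀ n k, n ≤ k → seq k ∈ S (seq n) := by
    intro n k hnk
    induction k, hnk using Nat.le_induction with
    | base => exact hS_self _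
    | succ k _ ih => exact le_add_dist_trans hr.le (hnext_mem (seq k) k) ih
  obtain ⟨u, hu⟩ := cauchySeq_tendsto_of_complete
    (cauchySeq_of_add_dist_le hr (hbdd.mono (range_comp_subset_range _ _)) hseq_mem)
  have hu_mem : ∀ n, u ∈ S (seq n) := fun n =>
    (hS_closed _).mem_of_tendsto hu (eventually_atTop.2 ⟨n, fun k hk => hseq_mem n k hk⟩)
  refine ⟨u, hu_mem 0, fun z => ?_⟩
  by_contra! hz
  have hu_le : ∀ n : ℕ, G u ≤ G z + (1 / 2) ^ n := fun n => by
    have hz_mem : z ∈ S (seq n) := le_add_dist_trans hr.le hz.le (hu_mem n)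
    have := csInf_le (hbdd.mono (image_subset_range _ _)) (mem_image_of_mem G hz_mem)
    have : G (seq (n + 1)) ≤ sInf (G '' S (seq n)) + (1 / 2) ^ n := hnext_le (seq n) n
    have : G u + r * dist u (seq (n + 1)) ≤ G (seq (n + 1)) := hu_mem (n + 1)
    nlinarith [dist_nonneg (x := u) (y := seq (n + 1))]
  have hlim : Tendsto (fun n : ℕ => G z + (1 / 2 : ℝ) ^ n) atTop (𝓝 (G z)) := by
    simpa using (tendsto_pow_atTop_nhds_zero_of_lt_one (by norm_num : (0 : ℝ) ≤ 1 / 2)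
      (by norm_num)).const_add (G z)
  nlinarith [ge_of_tendsto' hlim hu_le, dist_nonneg (x := z) (y := u)]

end Ekeland

lemma EReal.sub_coe_le_coe_iff {x : EReal} {s t : ℝ} :
    x - s ≤ t ↔ x ≤ ((t + s : ℝ) : EReal) := by
  rw [EReal.sub_le_iff_le_add (Or.inl (EReal.coe_ne_bot s)) (Or.inl (EReal.coe_ne_top s)),
    EReal.coe_add]

section Semicontinuity

variable {X : Type*} [TopologicalSpace X] {φ : X → EReal}

lemma LowerSemicontinuous.sub_continuous_coe (hφ : LowerSemicontinuous φ) {h : X → ℝ}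
    (hh : Continuous h) : LowerSemicontinuous fun z => φ z - (h z : EReal) :=
  hφ.add' (continuous_coe_real_ereal.comp hh.neg).lowerSemicontinuous fun _ =>
    EReal.continuousAt_add (Or.inr (EReal.coe_ne_bot _)) (Or.inr (EReal.coe_ne_top _))

lemma LowerSemicontinuous.eReal_toReal (hφ : LowerSemicontinuous φ) (htop : ∀ z, φ z ≠ ⊤)
    (hbot : ∀ z, φ z ≠ ⊥) : LowerSemicontinuous fun z => (φ z).toReal := by
  intro z₀ y hy
  have hy' : (y : EReal) < φ z₀ := by
    rwa [← EReal.coe_toReal (htop z₀) (hbot z₀), EReal.coe_lt_coe_iff]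
  filter_upwards [hφ z₀ y hy'] with z hz
  rw [← EReal.coe_toReal (htop z) (hbot z)] at hz
  exact EReal.coe_lt_coe_iff.1 hz

end Semicontinuity

/-- Convexity of an extended-real-valued function, through its epigraph over `ℝ`; this avoids
arithmetic with `±∞`. -/
def HasConvexEpigraph {X : Type*} [AddCommGroup X] [Module ℝ X] (φ : X → EReal) : Prop :=
  Convex ℝ {p : X × ℝ | φ p.1 ≤ p.2}

section Subdifferential

variable {X : Type*} [NormedAddCommGroup X] [NormedSpace ℝ X] {φ : X → EReal}

lemma hasConvexEpigraph_of_le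
    (h : ∀ x y : X, ∀ a b : ℝ, 0 ≤ a → 0 ≤ b → a + b = 1 →
      φ (a • x + b • y) ≤ (a : EReal) * φ x + (b : EReal) * φ y) :
    HasConvexEpigraph φ := by
  intro p hp q hq a b ha hb hab
  calc φ (a • p.1 + b • q.1) ≤ a * φ p.1 + b * φ q.1 := h _ _ _ _ ha hb hab
    _ ≤ a * p.2 + b * q.2 := add_le_add (mul_le_mul_of_nonneg_left hp (by exact_mod_cast ha))
        (mul_le_mul_of_nonneg_left hq (by exact_mod_cast hb))
    _ = ((a • p + b • q).2 : ℝ) := by simp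

lemma HasConvexEpigraph.sub_affine (hφ : HasConvexEpigraph φ) (ℓ : X →L[ℝ] ℝ) (c : ℝ) :
    HasConvexEpigraph fun z => φ z - ((ℓ z + c : ℝ) : EReal) := by
  intro p hp q hq a b ha hb hab
  have hp' : φ p.1 ≤ ((p.2 + (ℓ p.1 + c) : ℝ) : EReal) := EReal.sub_coe_le_coe_iff.1 hp
  have hq' : φ q.1 ≤ ((q.2 + (ℓ q.1 + c) : ℝ) : EReal) := EReal.sub_coe_le_coe_iff.1 hq
  have := hφ (x := (p.1, p.2 + (ℓ p.1 + c))) hp' (y := (q.1, q.2 + (ℓ q.1 + c))) hq' ha hb hab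
  refine EReal.sub_coe_le_coe_iff.2 (le_of_le_of_eq this ?_)
  simp only [Prod.smul_mk, Prod.mk_add_mk, smul_eq_mul, Prod.fst_add, Prod.snd_add, Prod.smul_fst,
    Prod.smul_snd, map_add, map_smul]
  congr 1
  linear_combination c * hab

lemma convex_setOf_add_norm_sub_lt (u : X) {r : ℝ} (hr : 0 ≤ r) (a : ℝ) :
    Convex ℝ {p : X × ℝ | p.2 + r * ‖p.1 - u‖ < a} := by
  refine convex_iff_forall_pos.2 fun p hp q hq α β hα hβ hαβ => ?_
  have hnorm : ‖(α • p + β • q).1 - u‖ ≤ α * ‖p.1 - u‖ + β * ‖q.1 - u‖ := by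
    calc ‖(α • p + β • q).1 - u‖ = ‖α • (p.1 - u) + β • (q.1 - u)‖ := by
          simp only [Prod.fst_add, Prod.smul_fst]
          congr 1
          linear_combination (norm := module) hαβ • u
      _ ≤ α * ‖p.1 - u‖ + β * ‖q.1 - u‖ := by
          refine (norm_add_le _ _).trans_eq ?_
          rw [norm_smul, norm_smul, Real.norm_of_nonneg hα.le, Real.norm_of_nonneg hβ.le]
  have hp' : 0 < α * (a - (p.2 + r * ‖p.1 - u‖)) := mul_pos hα (sub_pos.2 hp)
  have hq' : 0 < β * (a - (q.2 + r * ‖q.1 - u‖)) := mul_pos hβ (sub_pos.2 hq)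
  have ha : a = α * a + β * a := by rw [← add_mul, hαβ, one_mul]
  show (α • p + β • q).2 + r * ‖(α • p + β • q).1 - u‖ < a
  simp only [Prod.snd_add, Prod.smul_snd, smul_eq_mul]
  nlinarith [mul_le_mul_of_nonneg_left hnorm hr]

theorem exists_mem_subdiff_norm_le_of_le_add_norm (hφ : HasConvexEpigraph φ) {u : X} {a r : ℝ}
    (hu : φ u = a) (hr : 0 ≤ r) (hmin : ∀ z, (a : EReal) ≤ φ z + ((r * ‖z - u‖ : ℝ) : EReal)) :
    ∃ y ∈ subdiff φ u, ‖y‖ ≤ r := by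
  -- Separate the epigraph of `φ` from the open cone below `a - r‖· - u‖`; the separating
  -- functional `(z, t) ↦ ψ z + t α` has `α > 0`, and `-α⁻¹ ψ` is the subgradient.
  obtain ⟨Λ, s, hcone, hepi⟩ := geometric_hahn_banach_open (convex_setOf_add_norm_sub_lt u hr a)
    (isOpen_lt (by fun_prop) continuous_const) hφ <| by
      refine disjoint_left.2 fun p hp hpφ => ?_
      have : (a : EReal) ≤ ((p.2 + r * ‖p.1 - u‖ : ℝ) : EReal) := by
        rw [EReal.coe_add]; exact (hmin p.1).trans (add_le_add_left hpφ _)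
      exact (EReal.coe_le_coe_iff.1 this).not_gt hp
  set ψ : X →L[ℝ] ℝ := Λ.comp (ContinuousLinearMap.inl ℝ X ℝ)
  set α : ℝ := Λ (0, 1)
  have hΛ : ∀ z t, Λ (z, t) = ψ z + t * α := fun z t => by
    rw [show ((z, t) : X × ℝ) = (z, 0) + t • (0, 1) by simp, map_add, map_smul, smul_eq_mul]; rfl
  have hcone' : ∀ z t, t + r * ‖z - u‖ < a → ψ z + t * α < s := fun z t h =>
    hΛ z t ▸ hcone (z, t) h
  have hepi' : ∀ z (t : ℝ), φ z ≤ t → s ≤ ψ z + t * α := fun z t h => hΛ z t ▸ hepi (z, t) h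
  have hsu : s ≤ ψ u + a * α := hepi' u a hu.le
  have hα : 0 < α := by
    have := hcone' u (a - 1) (by simp)
    nlinarith
  have hcl : ∀ z, ψ z + (a - r * ‖z - u‖) * α ≤ s := fun z =>
    le_of_forall_pos_lt_add fun ε hε => by
      have := hcone' z (a - r * ‖z - u‖ - ε / α) (by linarith [div_pos hε hα])
      have h : (a - r * ‖z - u‖ - ε / α) * α = (a - r * ‖z - u‖) * α - ε := by field_simp
      linarith
  have hψ : ∀ w, ψ w ≤ α * (r * ‖w‖) := fun w => by
    have := hcl (u + w)
    simp only [map_add, add_sub_cancel_left] at this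
    linarith
  refine ⟨-α⁻¹ • ψ, ⟨by simp [hu], fun z => ?_⟩, ?_⟩
  · refine EReal.le_of_forall_lt_iff_le.1 fun t ht => ?_
    rw [hu, ← EReal.coe_add, EReal.coe_le_coe_iff]
    have := (hcl u).trans (hepi' z t ht.le)
    have hval : (-α⁻¹ • ψ) (z - u) = (ψ u - ψ z) / α := by
      simp only [smul_apply, smul_eq_mul, map_sub]; field_simp; ring
    rw [hval, ← le_sub_iff_add_le', div_le_iff₀ hα]
    simp only [sub_self, norm_zero, mul_zero, sub_zero] at this
    linarith
  · refine ContinuousLinearMap.opNorm_le_bound _ hr fun w => ?_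
    rw [smul_apply, smul_eq_mul, norm_mul, norm_neg, norm_inv,
      Real.norm_of_nonneg hα.le, Real.norm_eq_abs, inv_mul_le_iff₀ hα, abs_le]
    have := hψ (-w)
    rw [map_neg, norm_neg] at this
    exact ⟨by linarith, hψ w⟩

lemma mem_subdiff_of_mem_subdiff_sub_affine {ℓ y : X →L[ℝ] ℝ} {c : ℝ} {u : X}
    (hy : y ∈ subdiff (fun z => φ z - ((ℓ z + c : ℝ) : EReal)) u) : y + ℓ ∈ subdiff φ u := by
  obtain ⟨hu, hy⟩ := hy
  refine ⟨fun h => hu (by simp only [h]; exact EReal.top_sub_coe _), fun z => ?_⟩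
  have hcancel : φ u - ((ℓ u + c : ℝ) : EReal) + (y (z - u) : ℝ) + ((ℓ z + c : ℝ) : EReal) =
      φ u + ((y + ℓ) (z - u) : ℝ) := by
    rw [sub_eq_add_neg, ← EReal.coe_neg, add_assoc, add_assoc, ← EReal.coe_add, ← EReal.coe_add]
    congr 2
    simp only [add_apply, map_sub]
    ring
  rw [← hcancel]
  exact (EReal.le_sub_iff_add_le (Or.inl (EReal.coe_ne_bot _)) (Or.inl (EReal.coe_ne_top _))).1
    (hy z)

/-- The Brøndsted–Rockafellar theorem. -/
theorem exists_mem_subdiff_norm_le_of_lt_add [CompleteSpace X] (hφ : HasConvexEpigraph φ)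
    (hlsc : LowerSemicontinuous φ) {m ε δ : ℝ} (hm : ∀ z, (m : EReal) ≤ φ z) (hε : 0 < ε)
    (hδ : 0 < δ) {x₀ : X} (hx₀ : φ x₀ < ((m + ε : ℝ) : EReal)) :
    ∃ u, ‖u - x₀‖ < δ ∧ ∃ y ∈ subdiff φ u, ‖y‖ ≤ ε / δ := by
  -- Truncating at `m + ε` gives a real-valued function to which Ekeland's principle applies.
  set T : X → EReal := fun z => min (φ z) ((m + ε : ℝ) : EReal)
  have hT_ge : ∀ z, (m : EReal) ≤ T z := fun z =>
    le_min (hm z) (EReal.coe_le_coe_iff.2 (by linarith))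
  have hT_top : ∀ z, T z ≠ ⊤ := fun z => ne_top_of_le_ne_top (EReal.coe_ne_top _) (min_le_right _ _)
  have hT_bot : ∀ z, T z ≠ ⊥ := fun z => ne_bot_of_le_ne_bot (EReal.coe_ne_bot m) (hT_ge z)
  have hT_coe : ∀ z, ((T z).toReal : EReal) = T z := fun z => EReal.coe_toReal (hT_top z) (hT_bot z)
  set G : X → ℝ := fun z => (T z).toReal
  have hG_ge : ∀ z, m ≤ G z := fun z =>
    EReal.coe_le_coe_iff.1 ((hT_ge z).trans_eq (hT_coe z).symm)
  obtain ⟨u, hux₀, hu_min⟩ := exists_le_add_dist_forall_le_add_dist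
    ((hlsc.inf lowerSemicontinuous_const).eReal_toReal hT_top hT_bot)
    ⟨m, forall_mem_range.2 hG_ge⟩ (div_pos hε hδ) x₀
  have hGx₀ : G x₀ < m + ε := by
    rw [← EReal.coe_lt_coe_iff, hT_coe]
    exact min_lt_iff.2 (Or.inl hx₀)
  have hGu : G u < m + ε := by nlinarith [dist_nonneg (x := u) (y := x₀), div_pos hε hδ]
  have hφu : φ u = G u := by
    have hTu : T u < ((m + ε : ℝ) : EReal) := by rw [← hT_coe]; exact_mod_cast hGu
    rw [hT_coe]
    exact (min_eq_left (min_lt_iff.1 hTu |>.resolve_right (lt_irrefl _)).le).symm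
  refine ⟨u, ?_, exists_mem_subdiff_norm_le_of_le_add_norm hφ hφu (div_pos hε hδ).le fun z => ?_⟩
  · have : ε / δ * dist u x₀ < ε := by linarith [hG_ge u]
    rw [← dist_eq_norm]
    rwa [← lt_div_iff₀' (div_pos hε hδ), div_div_cancel₀ hε.ne'] at this
  · calc (G u : EReal) ≤ ((G z + ε / δ * ‖z - u‖ : ℝ) : EReal) := by
          rw [← dist_eq_norm]; exact EReal.coe_le_coe_iff.2 (hu_min z)
      _ = T z + ((ε / δ * ‖z - u‖ : ℝ) : EReal) := by rw [EReal.coe_add, hT_coe]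
      _ ≤ φ z + ((ε / δ * ‖z - u‖ : ℝ) : EReal) := add_le_add (min_le_left _ _) le_rfl

theorem exists_mem_subdiff_norm_sub_le_of_lt_add [CompleteSpace X] (hφ : HasConvexEpigraph φ)
    (hlsc : LowerSemicontinuous φ) {x₀ : X} (hx₀ : φ x₀ ≠ ⊥) {y₀ : X →L[ℝ] ℝ}
    (hy₀ : y₀ ∈ subdiff φ x₀) {ε δ : ℝ} (hε : 0 < ε) (hδ : 0 < δ) {x : X}
    (hx : φ x < φ x₀ + ((y₀ (x - x₀) + ε : ℝ) : EReal)) :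
    ∃ u, ‖u - x‖ < δ ∧ ∃ y ∈ subdiff φ u, ‖y - y₀‖ ≤ ε / δ := by
  set a := (φ x₀).toReal
  have hφa : φ x₀ = a := (EReal.coe_toReal hy₀.1 hx₀).symm
  have haffine : ∀ z, φ x₀ + ((y₀ (z - x₀) : ℝ) : EReal) =
      ((y₀ z + (a - y₀ x₀) : ℝ) : EReal) := fun z => by
    rw [hφa, ← EReal.coe_add, map_sub]; congr 1; ring
  have hg_nonneg : ∀ z, ((0 : ℝ) : EReal) ≤ φ z - ((y₀ z + (a - y₀ x₀) : ℝ) : EReal) := fun z => by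
    rw [EReal.le_sub_iff_add_le (Or.inl (EReal.coe_ne_bot _)) (Or.inl (EReal.coe_ne_top _)),
      EReal.coe_zero, zero_add, ← haffine]
    exact hy₀.2 z
  have hgx : φ x - ((y₀ x + (a - y₀ x₀) : ℝ) : EReal) < ((0 + ε : ℝ) : EReal) := by
    refine (EReal.sub_lt_iff (Or.inl (EReal.coe_ne_bot _)) (Or.inl (EReal.coe_ne_top _))).2
      (hx.trans_eq ?_)
    rw [hφa, ← EReal.coe_add, ← EReal.coe_add, map_sub]
    congr 1
    ring
  obtain ⟨u, hux, y, hy, hy_norm⟩ := exists_mem_subdiff_norm_le_of_lt_add (hφ.sub_affine y₀ _)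
    (hlsc.sub_continuous_coe (by fun_prop)) hg_nonneg hε hδ hgx
  exact ⟨u, hux, y + y₀, mem_subdiff_of_mem_subdiff_sub_affine hy, by rwa [add_sub_cancel_right]⟩

end Subdifferential

theorem stmt_4_general {X : Type*} [NormedAddCommGroup X] [NormedSpace ℝ X] [CompleteSpace X]
    (f : X → EReal)
    (hne_bot : ∀ x, f x ≠ ⊥)
    (hlsc : LowerSemicontinuous f)
    (hconv : ∀ x y : X, ∀ a b : ℝ, 0 ≤ a → 0 ≤ b → a + b = 1 →
      f (a • x + b • y) ≤ (a : EReal) * f x + (b : EReal) * f y)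
    (xbar : X) (ybar : X →L[ℝ] ℝ) (hybar : ybar ∈ subdiff f xbar)
    (κ : ℝ) (hκ : 0 < κ) (U : Set X) (hU : U ∈ 𝓝 xbar)
    (hsubreg : ∀ x ∈ U, ∀ y ∈ subdiff f x, ‖x - xbar‖ ≤ κ * ‖y - ybar‖) :
    ∀ c : ℝ, 0 < c → c < 1 / (4 * κ) →
      ∃ U' ∈ 𝓝 xbar, ∀ x ∈ U',
        f xbar + ((ybar (x - xbar) + c * ‖x - xbar‖ ^ 2 : ℝ) : EReal) ≤ f x := by
  intro c hc hcκ
  have hκc : 4 * κ * c < 1 := by rwa [lt_div_iff₀ (by positivity), mul_comm] at hcκ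
  obtain ⟨δ, hδ, hball⟩ := Metric.mem_nhds_iff.mp hU
  refine ⟨ball xbar (δ / 2), ball_mem_nhds _ (half_pos hδ), fun x hx => ?_⟩
  by_contra! hlt
  have hx_pos : 0 < ‖x - xbar‖ := by
    refine norm_pos_iff.2 fun h => hlt.not_ge ?_
    rw [sub_eq_zero.1 h, sub_self, map_zero, norm_zero]
    simp
  obtain ⟨u, hux, y, hy, hy_norm⟩ := exists_mem_subdiff_norm_sub_le_of_lt_add
    (hasConvexEpigraph_of_le hconv) hlsc (hne_bot xbar) hybar (by positivity) (half_pos hx_pos) hlt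
  rw [mem_ball, dist_eq_norm] at hx
  have hu_mem : u ∈ U := hball <| by
    rw [mem_ball, dist_eq_norm]
    linarith [norm_sub_le_norm_sub_add_norm_sub u x xbar]
  have hy_norm' : ‖y - ybar‖ ≤ 2 * c * ‖x - xbar‖ := hy_norm.trans_eq (by field_simp)
  nlinarith [hsubreg u hu_mem y hy, norm_sub_le_norm_sub_add_norm_sub x u xbar, norm_sub_rev x u]

/-- If `f ∈ Γ(X)` on a Banach space, `ȳ* ∈ ∂f(x̄)`, and `∂f` is strongly
metrically subregular at `x̄` for `ȳ*` with constant `κ > 0`, i.e. there is a neighborhood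
`U` of `x̄` with `‖x - x̄‖ ≤ κ·d(ȳ*, ∂f(x))` for all `x ∈ U` (stated pointwise over
`y* ∈ ∂f(x)`, matching the convention `d(ȳ*, ∅) = ∞`), then for every `0 < c < 1/(4κ)`
there is a neighborhood `U'` of `x̄` on which
`f(x) ≥ f(x̄) + ⟨ȳ*, x - x̄⟩ + c·‖x - x̄‖²` holds. -/
theorem stmt_4 {X : Type*} [NormedAddCommGroup X] [NormedSpace ℝ X] [CompleteSpace X]
    (f : X → EReal)
    (hproper : ∃ x, f x ≠ ⊤) (hne_bot : ∀ x, f x ≠ ⊥)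
    (hlsc : LowerSemicontinuous f)
    (hconv : ∀ x y : X, ∀ a b : ℝ, 0 ≤ a → 0 ≤ b → a + b = 1 →
      f (a • x + b • y) ≤ (a : EReal) * f x + (b : EReal) * f y)
    (xbar : X) (ybar : X →L[ℝ] ℝ) (hybar : ybar ∈ subdiff f xbar)
    (κ : ℝ) (hκ : 0 < κ) (U : Set X) (hU : U ∈ 𝓝 xbar)
    (hsubreg : ∀ x ∈ U, ∀ y ∈ subdiff f x, ‖x - xbar‖ ≤ κ * ‖y - ybar‖) :
    ∀ c : ℝ, 0 < c → c < 1 / (4 * κ) →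
      ∃ U' ∈ 𝓝 xbar, ∀ x ∈ U',
        f xbar + ((ybar (x - xbar) + c * ‖x - xbar‖ ^ 2 : ℝ) : EReal) ≤ f x :=
  stmt_4_general f hne_bot hlsc hconv xbar ybar hybar κ hκ U hU hsubreg
end

section
/- Let X be a finite-dimensional real normed space, let f ∈ Γ(X), and let x̄ ∈ X, ȳ* ∈ X* with ȳ* ∈ ∂f(x̄). Suppose there is a constant c > 0 such that ⟨z*, w⟩ ≥ c·‖w‖² for every w ∈ X and every z* ∈ D∂f(x̄|ȳ*)(w). Then for every κ > 1/c there exist neighborhoods U of x̄ and V of ȳ* such that ‖x − x̄‖ ≤ κ·‖y* − ȳ*‖ whenever (x, y*) ∈ gph ∂f ∩ (U × V); in particular, ∂f is strongly metrically subregular at x̄ for ȳ* with any constant κ > 1/c. -/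
/-!
If the estimate failed, there would be points `(xₙ, yₙ)` of the graph of `∂f` converging to
`(x̄, ȳ*)` with `κ‖yₙ - ȳ*‖ < ‖xₙ - x̄‖`. In finite dimensions the normalized differences
`(xₙ - x̄, yₙ - ȳ*) / ‖(xₙ - x̄, yₙ - ȳ*)‖` accumulate at a unit vector `(w, z*)` of the contingent
cone with `κ‖z*‖ ≤ ‖w‖`. But `c‖w‖² ≤ ⟨z*, w⟩ ≤ ‖z*‖‖w‖` gives `‖w‖ ≤ c⁻¹‖z*‖` with `c⁻¹ < κ`,
which forces `(w, z*) = 0`.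
-/

open Topology Filter Metric Set

/-- The contingent (Bouligand) cone to `K` at `z`: vectors `v` for which there are
sequences `τₙ ↓ 0` and `wₙ → v` with `z + τₙ • wₙ ∈ K`. -/
def contingentCone {Z : Type*} [NormedAddCommGroup Z] [NormedSpace ℝ Z]
    (K : Set Z) (z : Z) : Set Z :=
  {v | ∃ τ : ℕ → ℝ, ∃ w : ℕ → Z, (∀ n, 0 < τ n) ∧
      Filter.Tendsto τ Filter.atTop (𝓝 0) ∧
      Filter.Tendsto w Filter.atTop (𝓝 v) ∧ ∀ n, z + τ n • w n ∈ K}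

section ContingentCone

variable {Z : Type*} [NormedAddCommGroup Z] [NormedSpace ℝ Z] {K : Set Z} {z v : Z}
  {p : ℕ → Z}

theorem mem_contingentCone_of_tendsto (hpK : ∀ n, p n ∈ K) (hpz : Tendsto p atTop (𝓝 z))
    (hne : ∀ n, p n ≠ z) (hv : Tendsto (fun n ↦ ‖p n - z‖⁻¹ • (p n - z)) atTop (𝓝 v)) :
    v ∈ contingentCone K z := by
  have hpos : ∀ n, 0 < ‖p n - z‖ := fun n ↦ norm_pos_iff.2 (sub_ne_zero.2 (hne n))
  refine ⟨fun n ↦ ‖p n - z‖, _, hpos, ?_, hv, fun n ↦ ?_⟩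
  · simpa using (tendsto_iff_norm_sub_tendsto_zero.1 hpz)
  · rw [smul_smul, mul_inv_cancel₀ (hpos n).ne', one_smul, add_sub_cancel]
    exact hpK n

theorem exists_norm_eq_one_mem_contingentCone_inter [ProperSpace Z] {C : Set Z}
    (hC : IsClosed C) (hpK : ∀ n, p n ∈ K) (hpz : Tendsto p atTop (𝓝 z)) (hne : ∀ n, p n ≠ z)
    (hpC : ∀ n, ‖p n - z‖⁻¹ • (p n - z) ∈ C) :
    ∃ v ∈ contingentCone K z ∩ C, ‖v‖ = 1 := by
  have hsphere : ∀ n, ‖p n - z‖⁻¹ • (p n - z) ∈ sphere (0 : Z) 1 := fun n ↦ by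
    rw [mem_sphere_zero_iff_norm, norm_smul, norm_inv, norm_norm,
      inv_mul_cancel₀ (norm_ne_zero_iff.2 (sub_ne_zero.2 (hne n)))]
  obtain ⟨v, hv, φ, hφ, hlim⟩ := (isCompact_sphere (0 : Z) 1).tendsto_subseq hsphere
  refine ⟨v, ⟨?_, hC.mem_of_tendsto hlim (Eventually.of_forall fun n ↦ hpC (φ n))⟩,
    by simpa using hv⟩
  exact mem_contingentCone_of_tendsto (fun n ↦ hpK (φ n)) (hpz.comp hφ.tendsto_atTop)
    (fun n ↦ hne (φ n)) hlim

end ContingentCone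

theorem eventually_norm_sub_le_of_contingentCone {E F : Type*} [NormedAddCommGroup E]
    [NormedSpace ℝ E] [NormedAddCommGroup F] [NormedSpace ℝ F] [ProperSpace E] [ProperSpace F]
    {G : Set (E × F)} {x₀ : E} {y₀ : F} {L κ : ℝ}
    (hG : ∀ w z, (w, z) ∈ contingentCone G (x₀, y₀) → ‖w‖ ≤ L * ‖z‖) (hLκ : L < κ) :
    ∀ᶠ q in 𝓝 (x₀, y₀), q ∈ G → ‖q.1 - x₀‖ ≤ κ * ‖q.2 - y₀‖ := by
  by_contra hfail
  obtain ⟨p, hpz, hp⟩ := frequently_iff_seq_forall.1 (not_eventually.1 hfail)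
  simp only [Classical.not_imp, not_le] at hp
  set C : Set (E × F) := {u | κ * ‖u.2‖ ≤ ‖u.1‖}
  have hC : IsClosed C := isClosed_le (by fun_prop) (by fun_prop)
  have hne : ∀ n, p n ≠ (x₀, y₀) := fun n heq ↦ by
    have := (hp n).2
    simp [heq] at this
  have hpC : ∀ n, ‖p n - (x₀, y₀)‖⁻¹ • (p n - (x₀, y₀)) ∈ C := fun n ↦ by
    simp only [C, mem_ofPred_eq, Prod.smul_fst, Prod.smul_snd, Prod.fst_sub, Prod.snd_sub,
      norm_smul, norm_inv, norm_norm]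
    nlinarith [(hp n).2, inv_nonneg.2 (norm_nonneg (p n - (x₀, y₀)))]
  obtain ⟨⟨w, z⟩, ⟨hcone, hwz⟩, hnorm⟩ :=
    exists_norm_eq_one_mem_contingentCone_inter hC (fun n ↦ (hp n).1) hpz hne hpC
  have hw := hG w z hcone
  simp only [C, mem_ofPred_eq] at hwz
  have hz : ‖z‖ = 0 := by nlinarith [norm_nonneg z]
  rw [Prod.norm_def, hz] at hnorm
  rw [hz, mul_zero] at hw
  simp [le_antisymm hw (norm_nonneg w)] at hnorm

theorem norm_le_inv_mul_opNorm_of_mul_norm_sq_le {E : Type*} [NormedAddCommGroup E]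
    [NormedSpace ℝ E] {c : ℝ} (hc : 0 < c) {w : E} {z : E →L[ℝ] ℝ} (h : c * ‖w‖ ^ 2 ≤ z w) :
    ‖w‖ ≤ c⁻¹ * ‖z‖ := by
  rw [le_inv_mul_iff₀ hc]
  have hzw : z w ≤ ‖z‖ * ‖w‖ := (le_abs_self _).trans (z.le_opNorm w)
  rcases (norm_nonneg w).eq_or_lt with hw | hw
  · rw [← hw, mul_zero]
    exact norm_nonneg z
  · nlinarith

theorem stmt_9_general {X : Type*} [NormedAddCommGroup X] [NormedSpace ℝ X] [FiniteDimensional ℝ X]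
    (f : X → EReal)
    (xbar : X) (ybar : X →L[ℝ] ℝ)
    (c : ℝ) (hc : 0 < c)
    (hpos : ∀ (w : X) (z : X →L[ℝ] ℝ),
      (w, z) ∈ contingentCone {p : X × (X →L[ℝ] ℝ) | p.2 ∈ subdiff f p.1} (xbar, ybar) →
      c * ‖w‖ ^ 2 ≤ z w) :
    ∀ κ : ℝ, 1 / c < κ →
      ∃ U ∈ 𝓝 xbar, ∃ V ∈ 𝓝 ybar, ∀ x ∈ U, ∀ y ∈ subdiff f x, y ∈ V →
        ‖x - xbar‖ ≤ κ * ‖y - ybar‖ := by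
  intro κ hκ
  have hcone := fun w z h ↦ norm_le_inv_mul_opNorm_of_mul_norm_sq_le hc (hpos w z h)
  have hsubreg := eventually_norm_sub_le_of_contingentCone hcone (by rwa [← one_div])
  rw [nhds_prod_eq] at hsubreg
  obtain ⟨U, hU, V, hV, hUV⟩ := mem_prod_iff.1 hsubreg
  exact ⟨U, hU, V, hV, fun x hx y hy hyV ↦ hUV (mk_mem_prod hx hyV) hy⟩

/-- Let `X` be finite-dimensional, `f ∈ Γ(X)`, `ȳ* ∈ ∂f(x̄)`, and suppose
there is `c > 0` such that `⟨z*, w⟩ ≥ c·‖w‖²` for every `w ∈ X` and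
`z* ∈ D∂f(x̄|ȳ*)(w)` (contingent derivative). Then for every `κ > 1/c` there are
neighborhoods `U` of `x̄` and `V` of `ȳ*` with `‖x - x̄‖ ≤ κ·‖y* - ȳ*‖` whenever
`(x, y*) ∈ gph ∂f ∩ (U × V)`; in particular `∂f` is strongly metrically subregular
at `x̄` for `ȳ*` with any constant `κ > 1/c`. -/
theorem stmt_9 {X : Type*} [NormedAddCommGroup X] [NormedSpace ℝ X] [FiniteDimensional ℝ X]
    (f : X → EReal)
    (hproper : ∃ x, f x ≠ ⊤) (hne_bot : ∀ x, f x ≠ ⊥)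
    (hlsc : LowerSemicontinuous f)
    (hconv : ∀ x y : X, ∀ a b : ℝ, 0 ≤ a → 0 ≤ b → a + b = 1 →
      f (a • x + b • y) ≤ (a : EReal) * f x + (b : EReal) * f y)
    (xbar : X) (ybar : X →L[ℝ] ℝ) (hybar : ybar ∈ subdiff f xbar)
    (c : ℝ) (hc : 0 < c)
    (hpos : ∀ (w : X) (z : X →L[ℝ] ℝ),
      (w, z) ∈ contingentCone {p : X × (X →L[ℝ] ℝ) | p.2 ∈ subdiff f p.1} (xbar, ybar) →
      c * ‖w‖ ^ 2 ≤ z w) :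
    ∀ κ : ℝ, 1 / c < κ →
      ∃ U ∈ 𝓝 xbar, ∃ V ∈ 𝓝 ybar, ∀ x ∈ U, ∀ y ∈ subdiff f x, y ∈ V →
        ‖x - xbar‖ ≤ κ * ‖y - ybar‖ :=
  stmt_9_general f xbar ybar c hc hpos
end

section
/- Let X be a finite-dimensional real normed space, let f ∈ Γ(X), and let x̄ ∈ X be a point such that f is twice Fréchet differentiable on a neighborhood of x̄. Then the gradient mapping ∇f is strongly metrically subregular at x̄ for ∇f(x̄) (i.e., there exist κ > 0 and a neighborhood U of x̄ with ‖x − x̄‖ ≤ κ·‖∇f(x) − ∇f(x̄)‖ for all x ∈ U) if and only if there is a constant c > 0 such that the second derivative ∇²f(x̄) is positive-definite with modulus c, i.e., ⟨∇²f(x̄)u, u⟩ ≥ c·‖u‖² for all u ∈ X. -/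
open Topology Filter Metric Set

/-!
Convexity of `φ` near `x̄` makes `g` a monotone operator, so its derivative `H` at `x̄` is
positive semidefinite; as a second derivative it is also symmetric. Subregularity passes to the
derivative along rays: `‖u‖ ≤ κ ‖H u‖`. For a symmetric positive semidefinite form Cauchy–Schwarz
gives `‖H u‖² ≤ ‖H‖ ⟨H u, u⟩`, hence `‖u‖² ≤ κ² ‖H‖ ⟨H u, u⟩`. Conversely, if
`⟨H u, u⟩ ≥ c ‖u‖²`, the expansion `g x - g x̄ = H (x - x̄) + o(‖x - x̄‖)` yields
`‖x - x̄‖ ≤ (2 / c) ‖g x - g x̄‖` near `x̄`.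
-/

lemma convexOn_of_forall_eq_coe {X : Type*} [AddCommGroup X] [Module ℝ X] {f : X → EReal}
    (hconv : ∀ x y : X, ∀ a b : ℝ, 0 ≤ a → 0 ≤ b → a + b = 1 →
      f (a • x + b • y) ≤ (a : EReal) * f x + (b : EReal) * f y)
    {s : Set X} (hs : Convex ℝ s) {φ : X → ℝ} (hfφ : ∀ x ∈ s, f x = (φ x : EReal)) :
    ConvexOn ℝ s φ := by
  refine ⟨hs, fun x hx y hy a b ha hb hab => ?_⟩
  have h := hconv x y a b ha hb hab
  rwa [hfφ x hx, hfφ y hy, hfφ _ (hs hx hy ha hb hab), ← EReal.coe_mul, ← EReal.coe_mul,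
    ← EReal.coe_add, EReal.coe_le_coe_iff] at h

section Gradient

variable {X : Type*} [NormedAddCommGroup X] [NormedSpace ℝ X]

lemma ConvexOn.sub_apply_sub_nonneg_of_hasFDerivAt {s : Set X} {φ : X → ℝ}
    (hφ : ConvexOn ℝ s φ) {x y : X} (hx : x ∈ s) (hy : y ∈ s) {φ'x φ'y : X →L[ℝ] ℝ}
    (hφx : HasFDerivAt φ φ'x x) (hφy : HasFDerivAt φ φ'y y) :
    0 ≤ (φ'y - φ'x) (y - x) := by
  have hψ := hφ.comp_affineMap (AffineMap.lineMap x y)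
  have hderiv {z : X} {φ'z : X →L[ℝ] ℝ} (t : ℝ) (hz : AffineMap.lineMap x y t = z)
      (hφz : HasFDerivAt φ φ'z z) :
      HasDerivAt (φ ∘ AffineMap.lineMap x y) (φ'z (y - x)) t := by
    subst hz
    exact hφz.comp_hasDerivAt t (AffineMap.hasDerivAt_lineMap ..)
  have h0 : (0 : ℝ) ∈ AffineMap.lineMap x y ⁻¹' s := by simpa using hx
  have h1 : (1 : ℝ) ∈ AffineMap.lineMap x y ⁻¹' s := by simpa using hy
  have := (hψ.le_slope_of_hasDerivAt h0 h1 one_pos (hderiv 0 (by simp) hφx)).trans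
    (hψ.slope_le_of_hasDerivAt h0 h1 one_pos (hderiv 1 (by simp) hφy))
  simpa [sub_nonneg] using this

variable {F : Type*} [NormedAddCommGroup F] [NormedSpace ℝ F]

lemma HasFDerivAt.tendsto_slope_nhdsGT {g : X → F} {g' : X →L[ℝ] F} {x : X}
    (hg : HasFDerivAt g g' x) (u : X) :
    Tendsto (fun t : ℝ => t⁻¹ • (g (x + t • u) - g x)) (𝓝[>] 0) (𝓝 (g' u)) := by
  have := (hasDerivAt_iff_tendsto_slope.1 (hg.hasLineDerivAt u)).mono_left
    (nhdsGT_le_nhdsNE (0 : ℝ))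
  simpa [slope_fun_def] using this

lemma tendsto_add_smul_nhdsGT (x u : X) :
    Tendsto (fun t : ℝ => x + t • u) (𝓝[>] 0) (𝓝 x) :=
  (Continuous.tendsto' (by fun_prop) 0 x (by simp)).mono_left nhdsWithin_le_nhds

lemma HasFDerivAt.apply_self_nonneg {g : X → X →L[ℝ] ℝ} {H : X →L[ℝ] X →L[ℝ] ℝ} {x : X}
    (hg : HasFDerivAt g H x) (hmono : ∀ᶠ y in 𝓝 x, 0 ≤ (g y - g x) (y - x)) (u : X) :
    0 ≤ H u u := by
  have hlim := ((ContinuousLinearMap.apply ℝ ℝ u).continuous.tendsto _).comp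
    (hg.tendsto_slope_nhdsGT u)
  refine ge_of_tendsto hlim ?_
  filter_upwards [tendsto_add_smul_nhdsGT x u hmono, self_mem_nhdsWithin]
    with t ht (htpos : 0 < t)
  simp only [mem_preimage, mem_ofPred_eq, add_sub_cancel_left, map_smul, smul_eq_mul] at ht
  simpa using mul_nonneg (inv_nonneg.2 htpos.le) (nonneg_of_mul_nonneg_right ht htpos)

lemma HasFDerivAt.norm_le_mul_norm_apply {g : X → F} {g' : X →L[ℝ] F} {x : X} {κ : ℝ}
    (hg : HasFDerivAt g g' x) (hsub : ∀ᶠ y in 𝓝 x, ‖y - x‖ ≤ κ * ‖g y - g x‖) (u : X) :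
    ‖u‖ ≤ κ * ‖g' u‖ := by
  have hlim := ((hg.tendsto_slope_nhdsGT u).norm).const_mul κ
  refine ge_of_tendsto hlim ?_
  filter_upwards [tendsto_add_smul_nhdsGT x u hsub, self_mem_nhdsWithin]
    with t ht (htpos : 0 < t)
  rw [mem_preimage, mem_ofPred_eq, add_sub_cancel_left, norm_smul,
    Real.norm_of_nonneg htpos.le] at ht
  rw [norm_smul, Real.norm_of_nonneg (inv_nonneg.2 htpos.le), mul_left_comm]
  calc ‖u‖ = t⁻¹ * (t * ‖u‖) := by field_simp
    _ ≤ t⁻¹ * (κ * ‖g (x + t • u) - g x‖) := by gcongr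

end Gradient

namespace ContinuousLinearMap

variable {X : Type*} [NormedAddCommGroup X] [NormedSpace ℝ X]

lemma sq_norm_apply_le (B : X →L[ℝ] X →L[ℝ] ℝ) (hB : B.toBilinForm.IsPosSemidef) (u : X) :
    ‖B u‖ ^ 2 ≤ ‖B‖ * B u u := by
  have hBuu : 0 ≤ B u u := hB.nonneg u
  suffices ‖B u‖ ≤ √(‖B‖ * B u u) by
    rw [← Real.sq_sqrt (by positivity : 0 ≤ ‖B‖ * B u u)]
    exact pow_le_pow_left₀ (norm_nonneg _) this 2
  refine opNorm_le_bound _ (by positivity) fun v => ?_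
  rw [Real.norm_eq_abs]
  refine abs_le_of_sq_le_sq ?_ (by positivity)
  calc B u v ^ 2 ≤ B u u * B v v := B.toBilinForm.apply_sq_le_of_symm hB.nonneg
          (LinearMap.BilinForm.isSymm_iff.1 hB.isSymm) u v
    _ ≤ B u u * (‖B‖ * ‖v‖ ^ 2) := by
        gcongr
        calc B v v ≤ ‖B v v‖ := Real.le_norm_self _
          _ ≤ ‖B‖ * ‖v‖ ^ 2 := by simpa [sq, mul_assoc] using B.le_opNorm₂ v v
    _ = (√(‖B‖ * B u u) * ‖v‖) ^ 2 := by rw [mul_pow, Real.sq_sqrt (by positivity)]; ring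

lemma exists_coercive_of_norm_le (B : X →L[ℝ] X →L[ℝ] ℝ) (hB : B.toBilinForm.IsPosSemidef)
    {κ : ℝ} (hκ : ∀ u, ‖u‖ ≤ κ * ‖B u‖) : ∃ c > (0 : ℝ), ∀ u, c * ‖u‖ ^ 2 ≤ B u u := by
  set K := κ ^ 2 * ‖B‖
  have hK : 0 ≤ K := by positivity
  have hnorm (u : X) : ‖u‖ ^ 2 ≤ K * B u u := calc
    ‖u‖ ^ 2 ≤ (κ * ‖B u‖) ^ 2 := pow_le_pow_left₀ (norm_nonneg u) (hκ u) 2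
    _ = κ ^ 2 * ‖B u‖ ^ 2 := mul_pow ..
    _ ≤ K * B u u := by rw [mul_assoc]; gcongr; exact B.sq_norm_apply_le hB u
  refine ⟨(K + 1)⁻¹, by positivity, fun u => ?_⟩
  rw [inv_mul_le_iff₀ (by positivity)]
  have hBuu : 0 ≤ B u u := hB.nonneg u
  linarith [hnorm u]

end ContinuousLinearMap

lemma HasFDerivAt.eventually_norm_sub_le_of_coercive {X : Type*} [NormedAddCommGroup X]
    [NormedSpace ℝ X] {g : X → X →L[ℝ] ℝ} {H : X →L[ℝ] X →L[ℝ] ℝ} {x : X}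
    (hg : HasFDerivAt g H x) {c : ℝ} (hc : 0 < c) (hH : ∀ u, c * ‖u‖ ^ 2 ≤ H u u) :
    ∀ᶠ y in 𝓝 x, ‖y - x‖ ≤ 2 / c * ‖g y - g x‖ := by
  filter_upwards [hg.isLittleO.def (half_pos hc)] with y hy
  set d := y - x
  have hlin : (g y - g x) d ≤ ‖g y - g x‖ * ‖d‖ :=
    (Real.le_norm_self _).trans ((g y - g x).le_opNorm d)
  have herr : -((g y - g x - H d) d) ≤ c / 2 * ‖d‖ * ‖d‖ :=
    (neg_le_abs _).trans (((g y - g x - H d).le_opNorm d).trans (by gcongr))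
  have hsplit : H d d = (g y - g x) d - (g y - g x - H d) d := by simp
  have key : c / 2 * ‖d‖ * ‖d‖ ≤ ‖g y - g x‖ * ‖d‖ := by nlinarith [hH d]
  rcases (norm_nonneg d).eq_or_lt with hd | hd
  · rw [← hd]; positivity
  rw [div_mul_eq_mul_div, le_div_iff₀ hc]
  linarith [le_of_mul_le_mul_right key hd]

theorem stmt_10_general {X : Type*} [NormedAddCommGroup X] [NormedSpace ℝ X]
    (f : X → EReal)
    (hconv : ∀ x y : X, ∀ a b : ℝ, 0 ≤ a → 0 ≤ b → a + b = 1 →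
      f (a • x + b • y) ≤ (a : EReal) * f x + (b : EReal) * f y)
    (xbar : X) (U0 : Set X) (hU0 : U0 ∈ 𝓝 xbar)
    (φ : X → ℝ) (g : X → X →L[ℝ] ℝ) (H : X →L[ℝ] X →L[ℝ] ℝ)
    (hfφ : ∀ x ∈ U0, f x = (φ x : EReal))
    (hderiv : ∀ x ∈ U0, HasFDerivAt φ (g x) x)
    (hderiv2 : HasFDerivAt g H xbar) :
    (∃ κ > (0 : ℝ), ∃ U ∈ 𝓝 xbar, ∀ x ∈ U, ‖x - xbar‖ ≤ κ * ‖g x - g xbar‖) ↔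
    (∃ c > (0 : ℝ), ∀ u : X, c * ‖u‖ ^ 2 ≤ H u u) := by
  constructor
  · rintro ⟨κ, -, U, hU, hsub⟩
    obtain ⟨r, hr, hball⟩ := Metric.mem_nhds_iff.1 hU0
    have hφ : ConvexOn ℝ (ball xbar r) φ :=
      convexOn_of_forall_eq_coe hconv (convex_ball xbar r) fun x hx => hfφ x (hball hx)
    have hmono : ∀ᶠ y in 𝓝 xbar, 0 ≤ (g y - g xbar) (y - xbar) := by
      filter_upwards [ball_mem_nhds xbar hr] with y hy
      exact hφ.sub_apply_sub_nonneg_of_hasFDerivAt (mem_ball_self hr) hy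
        (hderiv xbar (mem_of_mem_nhds hU0)) (hderiv y (hball hy))
    have hH : H.toBilinForm.IsPosSemidef := LinearMap.BilinForm.isPosSemidef_def.2
      ⟨⟨second_derivative_symmetric_of_eventually (eventually_of_mem hU0 hderiv) hderiv2⟩,
        ⟨hderiv2.apply_self_nonneg hmono⟩⟩
    exact H.exists_coercive_of_norm_le hH
      (hderiv2.norm_le_mul_norm_apply (eventually_of_mem hU hsub))
  · rintro ⟨c, hc, hH⟩
    exact ⟨2 / c, by positivity, _, hderiv2.eventually_norm_sub_le_of_coercive hc hH,
      fun _ h => h⟩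

/-- Let `X` be a finite-dimensional real normed space and `f ∈ Γ(X)`
(proper lsc convex, values in `ℝ ∪ {∞}`). Suppose `f` is twice Fréchet differentiable on a
neighborhood `U₀` of `x̄`: namely, `f` agrees on `U₀` with a real-valued function `φ`
having Fréchet derivative `g x` at every `x ∈ U₀`, and `g` has Fréchet derivative `H`
(the second derivative `∇²f(x̄)`) at `x̄`. Then `∇f = g` is strongly metrically subregular
at `x̄` for `∇f(x̄) = g x̄` (i.e. `‖x - x̄‖ ≤ κ·‖g x - g x̄‖` near `x̄` for some `κ > 0`)
if and only if there is `c > 0` with `⟨H u, u⟩ ≥ c·‖u‖²` for all `u ∈ X`. -/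
theorem stmt_10 {X : Type*} [NormedAddCommGroup X] [NormedSpace ℝ X]
    [FiniteDimensional ℝ X]
    (f : X → EReal)
    (hproper : ∃ x, f x ≠ ⊤) (hne_bot : ∀ x, f x ≠ ⊥)
    (hlsc : LowerSemicontinuous f)
    (hconv : ∀ x y : X, ∀ a b : ℝ, 0 ≤ a → 0 ≤ b → a + b = 1 →
      f (a • x + b • y) ≤ (a : EReal) * f x + (b : EReal) * f y)
    (xbar : X) (U0 : Set X) (hU0 : U0 ∈ 𝓝 xbar)
    (φ : X → ℝ) (g : X → X →L[ℝ] ℝ) (H : X →L[ℝ] X →L[ℝ] ℝ)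
    (hfφ : ∀ x ∈ U0, f x = (φ x : EReal))
    (hderiv : ∀ x ∈ U0, HasFDerivAt φ (g x) x)
    (hderiv2 : HasFDerivAt g H xbar) :
    (∃ κ > (0 : ℝ), ∃ U ∈ 𝓝 xbar, ∀ x ∈ U, ‖x - xbar‖ ≤ κ * ‖g x - g xbar‖) ↔
    (∃ c > (0 : ℝ), ∀ u : X, c * ‖u‖ ^ 2 ≤ H u u) :=
  stmt_10_general f hconv xbar U0 hU0 φ g H hfφ hderiv hderiv2
end

section
/- Let X be a reflexive real Banach space, let f ∈ Γ(X), and let x̄ ∈ X, ȳ* ∈ X* with ȳ* ∈ ∂f(x̄). Then ∂f has the isolated calmness property at x̄ for ȳ* if and only if there exist a neighborhood V of ȳ* in X* and a constant c > 0 such that f*(y*) ≥ f*(ȳ*) + ⟨y* − ȳ*, x̄⟩ + c·‖y* − ȳ*‖² for all y* ∈ V. Specifically, if ∂f has the isolated calmness property at x̄ for ȳ* with constant κ, then the conjugate growth condition holds for every c < 1/(4κ); conversely, if the conjugate growth condition holds with constant c, then ∂f has the isolated calmness property at x̄ for ȳ* with constant 1/c. -/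
/-!
Growth implies calmness by a direct computation: for `y* ∈ ∂f(x)` the Fenchel–Young equality
`f*(y*) = ⟨y*, x⟩ - f(x)`, together with the Fenchel–Young inequality for `ȳ*` at `x`, turns
the growth condition into `c‖y* - ȳ*‖² ≤ ⟨y* - ȳ*, x - x̄⟩`.

Conversely, if the growth fails at `y*` with `e = ‖y* - ȳ*‖`, then, since
`f* ≥ ⟨·, x̄⟩ - f(x̄)`, the point `x̄` is a `c e²`-subgradient of the convex lower
semicontinuous function `f*` at `y*`. The Brøndsted–Rockafellar theorem (Ekeland's principle
followed by a Hahn–Banach separation) gives `z*` with `‖z* - y*‖ ≤ e/2` and an exact subgradient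
of `f*` at `z*` within `2ce` of `x̄`. By reflexivity it is a point `x ∈ X`, and since
`f ∈ Γ(X)` this means `z* ∈ ∂f(x)`. Calmness then gives `e/2 ≤ ‖z* - ȳ*‖ ≤ κ‖x - x̄‖ ≤ 2κce`,
which is impossible when `4κc < 1`.
-/

open Topology Filter Metric Set

noncomputable def fenchel {X : Type*} [NormedAddCommGroup X] [NormedSpace ℝ X]
    (f : X → EReal) (p : X →L[ℝ] ℝ) : EReal :=
  ⨆ x : X, (((p x : ℝ) : EReal) - f x)

def IsolatedCalmAt {X : Type*} [NormedAddCommGroup X] [NormedSpace ℝ X]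
    (f : X → EReal) (xbar : X) (ybar : X →L[ℝ] ℝ) (κ : ℝ) : Prop :=
  ∃ U ∈ 𝓝 xbar, ∃ V ∈ 𝓝 ybar, ∀ x ∈ U, ∀ y ∈ subdiff f x, y ∈ V →
    ‖y - ybar‖ ≤ κ * ‖x - xbar‖

def ConjIsolGrowth {X : Type*} [NormedAddCommGroup X] [NormedSpace ℝ X]
    (f : X → EReal) (xbar : X) (ybar : X →L[ℝ] ℝ) (c : ℝ) : Prop :=
  ∃ V ∈ 𝓝 ybar, ∀ y ∈ V,
    fenchel f ybar + (((y - ybar) xbar + c * ‖y - ybar‖ ^ 2 : ℝ) : EReal) ≤ fenchel f y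

section Epigraph

variable {α : Type*}

def epi (f : α → EReal) : Set (α × ℝ) := {q | f q.1 ≤ q.2}

@[simp] lemma mem_epi {f : α → EReal} {q : α × ℝ} : q ∈ epi f ↔ f q.1 ≤ q.2 := Iff.rfl

lemma isClosed_epi [TopologicalSpace α] {f : α → EReal} (hf : LowerSemicontinuous f) :
    IsClosed (epi f) :=
  hf.isClosed_epigraph.preimage
    (continuous_fst.prodMk (continuous_coe_real_ereal.comp continuous_snd))

end Epigraph

lemma ContinuousLinearMap.apply_prod_eq_add_mul {E : Type*} [NormedAddCommGroup E]
    [NormedSpace ℝ E] (φ : E × ℝ →L[ℝ] ℝ) (v : E) (t : ℝ) :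
    φ (v, t) = φ (v, 0) + t * φ (0, 1) := by
  rw [← smul_eq_mul, ← map_smul, ← map_add]
  simp

section Fenchel

variable {X : Type*} [NormedAddCommGroup X] [NormedSpace ℝ X] {f : X → EReal}

lemma coe_sub_le_fenchel {q : X × ℝ} (hq : q ∈ epi f) (w : X →L[ℝ] ℝ) :
    ((w q.1 - q.2 : ℝ) : EReal) ≤ fenchel f w :=
  (EReal.sub_le_sub le_rfl hq).trans (le_iSup (fun v => ((w v : ℝ) : EReal) - f v) q.1)

lemma fenchel_le_coe_iff {w : X →L[ℝ] ℝ} {K : ℝ} :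
    fenchel f w ≤ K ↔ ∀ q ∈ epi f, w q.1 - q.2 ≤ K := by
  refine ⟨fun h q hq => EReal.coe_le_coe_iff.mp ((coe_sub_le_fenchel hq w).trans h),
    fun h => iSup_le fun v => ?_⟩
  generalize hfv : f v = a
  induction a using EReal.rec with
  | bot => linarith [h (v, w v - K - 1) (by simp [hfv])]
  | coe t => exact_mod_cast h (v, t) (by simp [hfv])
  | top => simp

lemma lowerSemicontinuous_fenchel (f : X → EReal) : LowerSemicontinuous (fenchel f) := by
  refine lowerSemicontinuous_iSup fun v => ?_
  induction f v using EReal.rec with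
  | bot => simpa [EReal.coe_sub_bot] using lowerSemicontinuous_const
  | coe t =>
    exact (continuous_coe_real_ereal.comp
      ((ContinuousLinearMap.apply ℝ ℝ v).continuous.sub continuous_const)).lowerSemicontinuous
  | top => simpa using lowerSemicontinuous_const

lemma convex_epi_fenchel (f : X → EReal) : Convex ℝ (epi (fenchel f)) := by
  rintro ⟨w₁, t₁⟩ h₁ ⟨w₂, t₂⟩ h₂ a b ha hb hab
  simp only [mem_epi, fenchel_le_coe_iff] at h₁ h₂ ⊢
  intro q hq
  simp only [Prod.smul_mk, Prod.mk_add_mk, smul_eq_mul, add_apply, smul_apply]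
  linear_combination a * h₁ q hq + b * h₂ q hq + q.2 * hab

lemma fenchel_eq_of_mem_subdiff {x : X} {y : X →L[ℝ] ℝ} {r : ℝ} (hfx : f x = r)
    (hy : y ∈ subdiff f x) : fenchel f y = ((y x - r : ℝ) : EReal) := by
  refine le_antisymm (fenchel_le_coe_iff.2 fun q hq => ?_) (coe_sub_le_fenchel (f := f)
    (q := (x, r)) hfx.le y)
  have := (hy.2 q.1).trans hq
  rw [hfx, ← EReal.coe_add, EReal.coe_le_coe_iff, map_sub] at this
  linarith

lemma mem_subdiff_of_fenchel_le {x : X} {z : X →L[ℝ] ℝ} {fz : ℝ} (hfz : fenchel f z ≤ fz)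
    (hx : f x ≤ ((z x - fz : ℝ) : EReal)) : z ∈ subdiff f x := by
  refine ⟨ne_top_of_le_ne_top (EReal.coe_ne_top _) hx, fun v => ?_⟩
  refine EReal.le_of_forall_lt_iff_le.1 fun t ht => ?_
  have := fenchel_le_coe_iff.1 hfz (v, t) ht.le
  calc f x + ((z (v - x) : ℝ) : EReal)
      ≤ ((z x - fz : ℝ) : EReal) + ((z (v - x) : ℝ) : EReal) := by gcongr
    _ ≤ t := by
        rw [← EReal.coe_add, EReal.coe_le_coe_iff, map_sub]
        linarith

lemma le_sub_of_forall_le_fenchel (hclosed : IsClosed (epi f)) (hconv : Convex ℝ (epi f))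
    {x : X} {z : X →L[ℝ] ℝ} {fz : ℝ} (hfz : fenchel f z ≤ fz)
    (hx : ∀ w, ((fz + (w - z) x : ℝ) : EReal) ≤ fenchel f w) :
    f x ≤ ((z x - fz : ℝ) : EReal) := by
  by_contra hgt
  obtain ⟨ψ, u, hepi, hxu⟩ := geometric_hahn_banach_closed_point hconv hclosed
    (show (x, z x - fz) ∉ epi f from hgt)
  set q := ψ.comp (ContinuousLinearMap.inl ℝ X ℝ)
  set s := ψ (0, 1)
  have hψ (v : X) (t : ℝ) : ψ (v, t) = q v + t * s := ψ.apply_prod_eq_add_mul v t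
  -- The functional `(v, t) ↦ z v - t` is at most `fz` on `epi f`; adding `ε` times it to `ψ`
  -- makes the separating hyperplane non-vertical.
  set ε := |s| + 1
  have hε : 0 ≤ ε := by positivity
  have hσ : 0 < ε - s := by linarith [le_abs_self s]
  set w := (ε - s)⁻¹ • (q + ε • z)
  have hw : fenchel f w ≤ ((u + ε * fz) / (ε - s) : ℝ) := by
    refine fenchel_le_coe_iff.2 fun ⟨v, t⟩ hvt => ?_
    have h₁ := hepi _ hvt
    have h₂ := fenchel_le_coe_iff.1 hfz _ hvt
    rw [hψ] at h₁
    rw [le_div_iff₀ hσ]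
    simp only [w, smul_apply, add_apply, smul_eq_mul]
    field_simp
    linarith [mul_le_mul_of_nonneg_left h₂ hε]
  have := (hx w).trans hw
  rw [EReal.coe_le_coe_iff, le_div_iff₀ hσ] at this
  rw [hψ] at hxu
  simp only [w, sub_apply, smul_apply, add_apply, smul_eq_mul] at this
  field_simp at this
  linarith

lemma mem_subdiff_of_mem_subdiff_fenchel (hclosed : IsClosed (epi f))
    (hconv : Convex ℝ (epi f)) {x : X} {z : X →L[ℝ] ℝ} (hbot : fenchel f z ≠ ⊥)
    (h : NormedSpace.inclusionInDoubleDual ℝ X x ∈ subdiff (fenchel f) z) :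
    z ∈ subdiff f x := by
  obtain ⟨fz, hfz⟩ : ∃ fz : ℝ, fenchel f z = fz := ⟨_, (EReal.coe_toReal h.1 hbot).symm⟩
  have hx (w : X →L[ℝ] ℝ) : ((fz + (w - z) x : ℝ) : EReal) ≤ fenchel f w := by
    simpa [hfz, NormedSpace.dual_def] using h.2 w
  exact mem_subdiff_of_fenchel_le hfz.le (le_sub_of_forall_le_fenchel hclosed hconv hfz.le hx)

end Fenchel

section Ekeland

variable {α : Type*} [MetricSpace α] [CompleteSpace α]

theorem ekeland_variational_principle {G : α → ℝ} (hG : LowerSemicontinuous G)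
    (hbdd : BddBelow (range G)) (y : α) {r : ℝ} (hr : 0 < r) :
    ∃ z, G z + r * dist z y ≤ G y ∧ ∀ w, G z ≤ G w + r * dist w z := by
  set S : α → Set α := fun v => {w | G w + r * dist w v ≤ G v}
  have mem_self (v : α) : v ∈ S v := by simp [S]
  have subset_of_mem {v w : α} (hw : w ∈ S v) : S w ⊆ S v := fun u hu => by
    simp only [S, mem_ofPred_eq] at hw hu ⊢
    linarith [mul_le_mul_of_nonneg_left (dist_triangle u w v) hr.le]
  have hclosed (v : α) : IsClosed (S v) :=
    (hG.add (continuous_const.mul (continuous_id.dist continuous_const)).lowerSemicontinuous)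
      |>.isClosed_preimage (G v)
  -- Choosing `x (n + 1) ∈ S (x n)` to minimize `G` on `S (x n)` up to `2⁻ⁿ` confines
  -- `S (x (n + 1))` to a ball of radius `2⁻ⁿ / r`; `z` is the point common to all these sets.
  have next (v : α) (n : ℕ) : ∃ w ∈ S v, G w ≤ sInf (G '' S v) + (1 / 2) ^ n := by
    obtain ⟨_, ⟨w, hw, rfl⟩, hlt⟩ := exists_lt_of_csInf_lt ⟨_, mem_image_of_mem G (mem_self v)⟩
      (lt_add_of_pos_right _ (show (0 : ℝ) < (1 / 2) ^ n by positivity))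
    exact ⟨w, hw, hlt.le⟩
  choose nx hnxS hnxG using next
  let x : ℕ → α := fun n => Nat.rec y (fun n v => nx v n) n
  have small (n : ℕ) : S (x (n + 1)) ⊆ closedBall (x (n + 1)) ((1 / 2) ^ n / r) := by
    intro w (hw : G w + r * dist w (nx (x n) n) ≤ G (nx (x n) n))
    have hinf := csInf_le (hbdd.mono (image_subset_range _ _))
      (mem_image_of_mem G (subset_of_mem (hnxS _ _) hw))
    rw [mem_closedBall, le_div_iff₀ hr]
    linarith [hnxG (x n) n]
  have anti : Antitone fun n => S (x (n + 1)) :=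
    antitone_nat_of_succ_le fun n => subset_of_mem (hnxS _ _)
  have hdiam : Tendsto (fun n => diam (S (x (n + 1)))) atTop (𝓝 0) := by
    refine squeeze_zero (fun _ => diam_nonneg) (fun n => (diam_mono (small n)
      isBounded_closedBall).trans (diam_closedBall (by positivity))) ?_
    simpa using ((tendsto_pow_atTop_nhds_zero_of_lt_one (by norm_num : (0 : ℝ) ≤ 1 / 2)
      (by norm_num)).div_const r).const_mul 2
  obtain ⟨z, hz⟩ := nonempty_iInter_of_nonempty_biInter (fun n => hclosed _)
    (fun n => isBounded_closedBall.subset (small n))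
    (fun N => ⟨x (N + 1), mem_iInter₂.2 fun n hn => anti hn (mem_self _)⟩) hdiam
  rw [mem_iInter] at hz
  refine ⟨z, subset_of_mem (hnxS y 0) (hz 0), fun w => ?_⟩
  by_cases hw : w ∈ S z
  · have : dist w z ≤ 0 := ge_of_tendsto' hdiam fun n =>
      dist_le_diam_of_mem (isBounded_closedBall.subset (small n)) (subset_of_mem (hz n) hw) (hz n)
    simp [dist_le_zero.1 this]
  · exact (not_le.1 hw).le

theorem ekeland_variational_principle_ereal {G : α → EReal} (hG : LowerSemicontinuous G)
    {b : ℝ} (hb : ∀ w, (b : EReal) ≤ G w) {y : α} {gy : ℝ} (hy : G y = gy) {r : ℝ}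
    (hr : 0 < r) :
    ∃ z, ∃ gz : ℝ, G z = gz ∧ gz + r * dist z y ≤ gy ∧
      ∀ w, ((gz - r * dist w z : ℝ) : EReal) ≤ G w := by
  -- Truncating `G` above its value at `y` does not change the conclusion.
  set M : ℝ := gy + 1
  set T : α → ℝ := fun w => (min (G w) M).toReal
  have hlow (w : α) : ((min b M : ℝ) : EReal) ≤ min (G w) M :=
    le_min ((EReal.coe_le_coe_iff.2 (min_le_left _ _)).trans (hb w))
      (EReal.coe_le_coe_iff.2 (min_le_right _ _))
  have hT (w : α) : ((T w : ℝ) : EReal) = min (G w) M :=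
    EReal.coe_toReal ((min_le_right _ _).trans_lt (EReal.coe_lt_top M)).ne
      ((EReal.bot_lt_coe _).trans_le (hlow w)).ne'
  have hTlsc : LowerSemicontinuous T := fun w₀ t ht => by
    have : (t : EReal) < min (G w₀) M := by rw [← hT]; exact_mod_cast ht
    filter_upwards [(hG.inf lowerSemicontinuous_const) w₀ t this] with w hw
    rw [← hT] at hw
    exact_mod_cast hw
  have hTbdd : BddBelow (range T) := ⟨min b M, by
    rintro _ ⟨w, rfl⟩
    rw [← EReal.coe_le_coe_iff, hT]
    exact hlow w⟩
  have hTy : T y = gy := by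
    rw [← EReal.coe_eq_coe_iff, hT, hy, min_eq_left]
    exact_mod_cast (lt_add_one gy).le
  obtain ⟨z, hzy, hzmin⟩ := ekeland_variational_principle hTlsc hTbdd y hr
  rw [hTy] at hzy
  have hdist := mul_nonneg hr.le (dist_nonneg (x := z) (y := y))
  have hGz : G z = T z := by
    rw [hT, eq_comm, min_eq_left_iff]
    by_contra h
    have hTz : T z < M := by linarith
    rw [← EReal.coe_lt_coe_iff, hT, min_eq_right (not_le.1 h).le] at hTz
    exact lt_irrefl _ hTz
  refine ⟨z, T z, hGz, hzy, fun w => ?_⟩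
  rcases le_or_gt (M : EReal) (G w) with hw | hw
  · refine le_trans ?_ hw
    rw [EReal.coe_le_coe_iff]
    linarith [mul_nonneg hr.le (dist_nonneg (x := w) (y := z))]
  · rw [← min_eq_left hw.le, ← hT, EReal.coe_le_coe_iff]
    linarith [hzmin w]

end Ekeland

section Subgradient

variable {E : Type*} [NormedAddCommGroup E] [NormedSpace ℝ E]

theorem exists_mem_subdiff_norm_sub_le_s13 {h : E → EReal} (hconv : Convex ℝ (epi h)) {z : E}
    {hz : ℝ} (hhz : h z = hz) (ℓ : E →L[ℝ] ℝ) {ρ : ℝ} (hρ : 0 ≤ ρ)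
    (hmin : ∀ w, ((hz + ℓ (w - z) - ρ * ‖w - z‖ : ℝ) : EReal) ≤ h w) :
    ∃ p ∈ subdiff h z, ‖p - ℓ‖ ≤ ρ := by
  -- Separate `epi h` from the open strict hypograph of the concave minorant in `hmin`.
  set F : E × ℝ → ℝ := fun q => q.2 - ℓ (q.1 - z) + ρ * ‖q.1 - z‖
  set B : Set (E × ℝ) := {q | F q < hz}
  have hFconv : ConvexOn ℝ univ F := by
    refine ⟨convex_univ, fun q₁ _ q₂ _ a b ha hb hab => ?_⟩
    have hd : (a • q₁ + b • q₂).1 - z = a • (q₁.1 - z) + b • (q₂.1 - z) := by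
      simp only [Prod.fst_add, Prod.smul_fst]
      match_scalars <;> linarith
    have hn : ‖a • (q₁.1 - z) + b • (q₂.1 - z)‖ ≤ a * ‖q₁.1 - z‖ + b * ‖q₂.1 - z‖ :=
      (norm_add_le _ _).trans_eq (by rw [norm_smul, norm_smul, Real.norm_of_nonneg ha,
        Real.norm_of_nonneg hb])
    show (a • q₁ + b • q₂).2 - ℓ ((a • q₁ + b • q₂).1 - z) + ρ * ‖(a • q₁ + b • q₂).1 - z‖ ≤
      a • F q₁ + b • F q₂
    rw [hd, map_add, map_smul, map_smul]
    simp only [F, smul_eq_mul, Prod.snd_add, Prod.smul_snd]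
    linarith [mul_le_mul_of_nonneg_left hn hρ]
  have hBconv : Convex ℝ B := by simpa [B] using hFconv.convex_lt hz
  have hBopen : IsOpen B := isOpen_lt (by fun_prop) continuous_const
  have hdisj : Disjoint B (epi h) := disjoint_left.2 fun q (hqB : F q < hz) hq => by
    have := EReal.coe_le_coe_iff.1 ((hmin q.1).trans hq)
    linarith
  obtain ⟨φ, u, hφB, hφA⟩ := geometric_hahn_banach_open hBconv hBopen hconv hdisj
  set q := φ.comp (ContinuousLinearMap.inl ℝ E ℝ)
  set s := φ (0, 1)
  have hφ (v : E) (t : ℝ) : φ (v, t) = q v + t * s := φ.apply_prod_eq_add_mul v t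
  have hB (d : E) {δ : ℝ} (hδ : 0 < δ) :
      q (z + d) + (hz + ℓ d - ρ * ‖d‖ - δ) * s < u := by
    rw [← hφ]
    exact hφB _ (show F _ < hz by simp only [F, add_sub_cancel_left]; linarith)
  have hu_le : u ≤ q z + hz * s := by rw [← hφ]; exact hφA _ (by simp [hhz])
  have hs : 0 < s := by
    have := hB 0 one_pos
    simp only [add_zero, map_zero, norm_zero, mul_zero, sub_zero] at this
    linarith
  have hu : u = q z + hz * s := by
    refine le_antisymm hu_le (le_of_forall_pos_lt_add fun ε hε => ?_)
    have := hB 0 (div_pos hε hs)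
    rw [sub_mul, div_mul_cancel₀ _ hs.ne'] at this
    simp only [add_zero, map_zero, norm_zero, mul_zero, sub_zero] at this
    linarith
  have key (d : E) : q d + s * ℓ d ≤ s * ρ * ‖d‖ := by
    refine le_of_forall_pos_lt_add fun ε hε => ?_
    have := hB d (div_pos hε hs)
    rw [map_add, sub_mul, div_mul_cancel₀ _ hs.ne'] at this
    linarith
  refine ⟨-s⁻¹ • q, ⟨by simp [hhz], fun w => ?_⟩, ?_⟩
  · refine EReal.le_of_forall_lt_iff_le.1 fun t ht => ?_
    have := hφA (w, t) ht.le
    rw [hφ] at this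
    have hle : (hz * s - q (w - z)) / s ≤ t := (div_le_iff₀ hs).2 (by rw [map_sub]; linarith)
    rw [hhz, ← EReal.coe_add, EReal.coe_le_coe_iff]
    refine le_of_eq_of_le ?_ hle
    simp only [smul_apply, smul_eq_mul]
    field_simp
    ring
  · refine ContinuousLinearMap.opNorm_le_bound _ hρ fun d => ?_
    have h₁ := key d
    have h₂ := key (-d)
    simp only [map_neg, norm_neg] at h₂
    have e : (-s⁻¹ • q - ℓ) d = -((q d + s * ℓ d) / s) := by
      simp only [sub_apply, smul_apply, smul_eq_mul]
      field_simp
      ring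
    rw [e, norm_neg, Real.norm_eq_abs, abs_div, abs_of_pos hs, div_le_iff₀ hs, abs_le]
    constructor <;> linarith

theorem brondsted_rockafellar [CompleteSpace E] {h : E → EReal} (hlsc : LowerSemicontinuous h)
    (hconv : Convex ℝ (epi h)) {y : E} {hy : ℝ} (hhy : h y = hy) (ℓ : E →L[ℝ] ℝ) {ε : ℝ}
    (hε : 0 < ε) (hℓ : ∀ w, ((hy + ℓ (w - y) - ε : ℝ) : EReal) ≤ h w) {δ : ℝ} (hδ : 0 < δ) :
    ∃ z, ∃ p ∈ subdiff h z, ‖z - y‖ ≤ δ ∧ ‖p - ℓ‖ ≤ ε / δ := by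
  set G : E → EReal := fun w => h w - ℓ w
  have hG (w : E) {a : ℝ} : (a : EReal) ≤ G w ↔ ((a + ℓ w : ℝ) : EReal) ≤ h w := by
    rw [EReal.le_sub_iff_add_le (.inl (EReal.coe_ne_bot _)) (.inl (EReal.coe_ne_top _)),
      EReal.coe_add]
  have hGlsc : LowerSemicontinuous G :=
    hlsc.add' (continuous_coe_real_ereal.comp (-ℓ).continuous).lowerSemicontinuous
      fun w => EReal.continuousAt_add (.inr (EReal.coe_ne_bot _)) (.inr (EReal.coe_ne_top _))
  have hGb (w : E) : ((hy - ℓ y - ε : ℝ) : EReal) ≤ G w :=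
    (hG w).2 (by convert hℓ w using 2; rw [map_sub]; ring)
  have hGy : G y = ((hy - ℓ y : ℝ) : EReal) := by simp [G, hhy]
  obtain ⟨z, gz, hGz, hzy, hzmin⟩ :=
    ekeland_variational_principle_ereal hGlsc hGb hGy (div_pos hε hδ)
  have hhz : h z = ((gz + ℓ z : ℝ) : EReal) := by
    rw [EReal.coe_add, ← hGz, EReal.sub_add_cancel]
  obtain ⟨p, hp, hpℓ⟩ := exists_mem_subdiff_norm_sub_le_s13 hconv hhz ℓ (div_pos hε hδ).le
    fun w => by convert (hG w).1 (hzmin w) using 2; rw [dist_eq_norm, map_sub]; ring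
  refine ⟨z, p, hp, ?_, hpℓ⟩
  have hgz := hGb z
  rw [hGz, EReal.coe_le_coe_iff] at hgz
  rw [dist_eq_norm, div_mul_eq_mul_div] at hzy
  have : ε * ‖z - y‖ ≤ ε * δ := (div_le_iff₀ hδ).1 (by linarith)
  exact le_of_mul_le_mul_left this hε

end Subgradient

section Calmness

variable {X : Type*} [NormedAddCommGroup X] [NormedSpace ℝ X] {f : X → EReal}

lemma convex_epi_of_le_add
    (hconv : ∀ x y : X, ∀ a b : ℝ, 0 ≤ a → 0 ≤ b → a + b = 1 →
      f (a • x + b • y) ≤ (a : EReal) * f x + (b : EReal) * f y) :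
    Convex ℝ (epi f) := by
  rintro ⟨x₁, t₁⟩ h₁ ⟨x₂, t₂⟩ h₂ a b ha hb hab
  refine (hconv x₁ x₂ a b ha hb hab).trans ?_
  calc (a : EReal) * f x₁ + b * f x₂ ≤ a * t₁ + b * t₂ :=
        add_le_add (mul_le_mul_of_nonneg_left h₁ (by exact_mod_cast ha))
          (mul_le_mul_of_nonneg_left h₂ (by exact_mod_cast hb))
    _ = ((a * t₁ + b * t₂ : ℝ) : EReal) := by norm_cast

lemma exists_coe_eq_of_mem_subdiff (hne_bot : ∀ x, f x ≠ ⊥) {x : X} {y : X →L[ℝ] ℝ}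
    (hy : y ∈ subdiff f x) : ∃ r : ℝ, f x = r :=
  ⟨_, (EReal.coe_toReal hy.1 (hne_bot x)).symm⟩

theorem isolatedCalmAt_of_conjIsolGrowth (hne_bot : ∀ x, f x ≠ ⊥) {xbar : X}
    {ybar : X →L[ℝ] ℝ} (hybar : ybar ∈ subdiff f xbar) {c : ℝ} (hc : 0 < c)
    (hgrowth : ConjIsolGrowth f xbar ybar c) : IsolatedCalmAt f xbar ybar (1 / c) := by
  obtain ⟨V, hV, hgrowth⟩ := hgrowth
  refine ⟨univ, univ_mem, V, hV, fun x _ y hy hyV => ?_⟩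
  obtain ⟨r, hr⟩ := exists_coe_eq_of_mem_subdiff hne_bot hybar
  obtain ⟨rx, hrx⟩ := exists_coe_eq_of_mem_subdiff hne_bot hy
  have hgy := hgrowth y hyV
  rw [fenchel_eq_of_mem_subdiff hr hybar, fenchel_eq_of_mem_subdiff hrx hy, ← EReal.coe_add,
    EReal.coe_le_coe_iff] at hgy
  have hyoung := coe_sub_le_fenchel (f := f) (q := (x, rx)) hrx.le ybar
  rw [fenchel_eq_of_mem_subdiff hr hybar, EReal.coe_le_coe_iff] at hyoung
  have hpair : (y - ybar) (x - xbar) ≤ ‖y - ybar‖ * ‖x - xbar‖ :=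
    (le_abs_self _).trans ((y - ybar).le_opNorm _)
  simp only [sub_apply, map_sub] at hgy hpair
  have hsq : c * ‖y - ybar‖ ^ 2 ≤ ‖y - ybar‖ * ‖x - xbar‖ := by linarith
  rw [one_div_mul_eq_div, le_div_iff₀ hc]
  rcases (norm_nonneg (y - ybar)).eq_or_lt with h0 | h0
  · simp [← h0]
  · exact le_of_mul_le_mul_left (by linarith) h0

theorem exists_mem_subdiff_near_of_fenchel_lt
    (hrefl : Function.Surjective ⇑(NormedSpace.inclusionInDoubleDual ℝ X))
    (hne_bot : ∀ x, f x ≠ ⊥) (hclosed : IsClosed (epi f)) (hconv : Convex ℝ (epi f))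
    {xbar : X} {ybar : X →L[ℝ] ℝ} (hybar : ybar ∈ subdiff f xbar) {y : X →L[ℝ] ℝ}
    (hy : y ≠ ybar) {c : ℝ} (hc : 0 < c)
    (hlt : fenchel f y < fenchel f ybar + (((y - ybar) xbar + c * ‖y - ybar‖ ^ 2 : ℝ) : EReal)) :
    ∃ x, ∃ z ∈ subdiff f x, ‖z - y‖ ≤ ‖y - ybar‖ / 2 ∧ ‖x - xbar‖ ≤ 2 * c * ‖y - ybar‖ := by
  obtain ⟨r, hr⟩ := exists_coe_eq_of_mem_subdiff hne_bot hybar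
  have hlow (w : X →L[ℝ] ℝ) : ((w xbar - r : ℝ) : EReal) ≤ fenchel f w :=
    coe_sub_le_fenchel (f := f) (q := (xbar, r)) hr.le w
  rw [fenchel_eq_of_mem_subdiff hr hybar, ← EReal.coe_add] at hlt
  obtain ⟨F, hF⟩ : ∃ F : ℝ, fenchel f y = F := ⟨_, (EReal.coe_toReal
    (hlt.trans (EReal.coe_lt_top _)).ne ((EReal.bot_lt_coe _).trans_le (hlow y)).ne').symm⟩
  have hFlow := hlow y
  rw [hF, EReal.coe_le_coe_iff] at hFlow
  rw [hF, EReal.coe_lt_coe_iff, sub_apply] at hlt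
  set e := ‖y - ybar‖
  have he : 0 < e := norm_pos_iff.2 (sub_ne_zero.2 hy)
  set J := NormedSpace.inclusionInDoubleDual ℝ X
  have happrox (w : X →L[ℝ] ℝ) :
      ((F + J xbar (w - y) - c * e ^ 2 : ℝ) : EReal) ≤ fenchel f w := by
    refine (EReal.coe_le_coe_iff.2 ?_).trans (hlow w)
    simp only [J, NormedSpace.dual_def, sub_apply]
    linarith
  obtain ⟨z, p, hp, hzy, hpJ⟩ := brondsted_rockafellar (lowerSemicontinuous_fenchel f)
    (convex_epi_fenchel f) hF (J xbar) (by positivity) happrox (show 0 < e / 2 by positivity)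
  obtain ⟨x, rfl⟩ := hrefl p
  refine ⟨x, z, mem_subdiff_of_mem_subdiff_fenchel hclosed hconv
    ((EReal.bot_lt_coe _).trans_le (hlow z)).ne' hp, hzy, ?_⟩
  calc ‖x - xbar‖ = ‖J x - J xbar‖ := by
        rw [← map_sub]; exact ((NormedSpace.inclusionInDoubleDualLi ℝ).norm_map _).symm
    _ ≤ c * e ^ 2 / (e / 2) := hpJ
    _ = 2 * c * e := by field_simp

theorem conjIsolGrowth_of_isolatedCalmAt
    (hrefl : Function.Surjective ⇑(NormedSpace.inclusionInDoubleDual ℝ X))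
    (hne_bot : ∀ x, f x ≠ ⊥) (hclosed : IsClosed (epi f)) (hconv : Convex ℝ (epi f))
    {xbar : X} {ybar : X →L[ℝ] ℝ} (hybar : ybar ∈ subdiff f xbar) {κ : ℝ} (hκ : 0 < κ)
    (hcalm : IsolatedCalmAt f xbar ybar κ) {c : ℝ} (hc : 0 < c) (hcκ : c < 1 / (4 * κ)) :
    ConjIsolGrowth f xbar ybar c := by
  obtain ⟨U, hU, V, hV, hcalm⟩ := hcalm
  obtain ⟨δU, hδU, hUb⟩ := Metric.mem_nhds_iff.mp hU
  obtain ⟨δV, hδV, hVb⟩ := Metric.mem_nhds_iff.mp hV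
  refine ⟨ball ybar (min (δV / 2) (δU / (4 * c))), ball_mem_nhds _ (by positivity),
    fun y hy => ?_⟩
  rcases eq_or_ne y ybar with rfl | hne
  · simp
  rw [mem_ball, dist_eq_norm, lt_min_iff, lt_div_iff₀ two_pos, lt_div_iff₀ (by positivity)] at hy
  by_contra! hlt
  obtain ⟨x, z, hz, hzy, hx⟩ :=
    exists_mem_subdiff_near_of_fenchel_lt hrefl hne_bot hclosed hconv hybar hne hc hlt
  have hzV : z ∈ V := hVb (by
    rw [mem_ball, dist_eq_norm]
    linarith [norm_sub_le_norm_sub_add_norm_sub z y ybar])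
  have hxU : x ∈ U := hUb (by rw [mem_ball, dist_eq_norm]; linarith)
  have hfar : ‖y - ybar‖ / 2 ≤ ‖z - ybar‖ := by
    linarith [norm_sub_le_norm_sub_add_norm_sub y z ybar, norm_sub_rev y z]
  have hnear : ‖y - ybar‖ / 2 ≤ κ * (2 * c * ‖y - ybar‖) :=
    hfar.trans ((hcalm x hxU z hz hzV).trans (mul_le_mul_of_nonneg_left hx hκ.le))
  rw [lt_div_iff₀ (by positivity)] at hcκ
  nlinarith [norm_pos_iff.2 (sub_ne_zero.2 hne)]

end Calmness

theorem stmt_13_general {X : Type*} [NormedAddCommGroup X] [NormedSpace ℝ X]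
    (hrefl : Function.Surjective ⇑(NormedSpace.inclusionInDoubleDual ℝ X))
    (f : X → EReal)
    (hne_bot : ∀ x, f x ≠ ⊥)
    (hlsc : LowerSemicontinuous f)
    (hconv : ∀ x y : X, ∀ a b : ℝ, 0 ≤ a → 0 ≤ b → a + b = 1 →
      f (a • x + b • y) ≤ (a : EReal) * f x + (b : EReal) * f y)
    (xbar : X) (ybar : X →L[ℝ] ℝ) (hybar : ybar ∈ subdiff f xbar) :
    ((∃ κ > (0 : ℝ), IsolatedCalmAt f xbar ybar κ) ↔
      (∃ c > (0 : ℝ), ConjIsolGrowth f xbar ybar c)) ∧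
    (∀ κ > (0 : ℝ), IsolatedCalmAt f xbar ybar κ →
      ∀ c : ℝ, 0 < c → c < 1 / (4 * κ) → ConjIsolGrowth f xbar ybar c) ∧
    (∀ c > (0 : ℝ), ConjIsolGrowth f xbar ybar c → IsolatedCalmAt f xbar ybar (1 / c)) := by
  have growth (κ : ℝ) (hκ : 0 < κ) (hcalm : IsolatedCalmAt f xbar ybar κ) (c : ℝ) (hc : 0 < c)
      (hcκ : c < 1 / (4 * κ)) : ConjIsolGrowth f xbar ybar c :=
    conjIsolGrowth_of_isolatedCalmAt hrefl hne_bot (isClosed_epi hlsc) (convex_epi_of_le_add hconv)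
      hybar hκ hcalm hc hcκ
  have calm (c : ℝ) (hc : 0 < c) (hgrowth : ConjIsolGrowth f xbar ybar c) :
      IsolatedCalmAt f xbar ybar (1 / c) :=
    isolatedCalmAt_of_conjIsolGrowth hne_bot hybar hc hgrowth
  refine ⟨⟨fun ⟨κ, hκ, hcalm⟩ => ⟨1 / (8 * κ), by positivity, growth κ hκ hcalm _ (by positivity)
    (by gcongr; norm_num)⟩, fun ⟨c, hc, hgrowth⟩ => ⟨1 / c, by positivity, calm c hc hgrowth⟩⟩,
    growth, calm⟩

/-- Let `X` be a reflexive Banach space, `f ∈ Γ(X)`, `ȳ* ∈ ∂f(x̄)`. Then `∂f`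
has the isolated calmness property at `x̄` for `ȳ*` iff the conjugate quadratic growth
condition `f*(y*) ≥ f*(ȳ*) + ⟨y* - ȳ*, x̄⟩ + c·‖y* - ȳ*‖²` holds for some `c > 0` on some
neighborhood of `ȳ*`. Specifically, isolated calmness with constant `κ` yields the growth
condition for every `0 < c < 1/(4κ)`, and the growth condition with constant `c` yields
isolated calmness with constant `1/c`. -/
theorem stmt_13 {X : Type*} [NormedAddCommGroup X] [NormedSpace ℝ X] [CompleteSpace X]
    (hrefl : Function.Surjective ⇑(NormedSpace.inclusionInDoubleDual ℝ X))
    (f : X → EReal)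
    (hproper : ∃ x, f x ≠ ⊤) (hne_bot : ∀ x, f x ≠ ⊥)
    (hlsc : LowerSemicontinuous f)
    (hconv : ∀ x y : X, ∀ a b : ℝ, 0 ≤ a → 0 ≤ b → a + b = 1 →
      f (a • x + b • y) ≤ (a : EReal) * f x + (b : EReal) * f y)
    (xbar : X) (ybar : X →L[ℝ] ℝ) (hybar : ybar ∈ subdiff f xbar) :
    ((∃ κ > (0 : ℝ), IsolatedCalmAt f xbar ybar κ) ↔
      (∃ c > (0 : ℝ), ConjIsolGrowth f xbar ybar c)) ∧
    (∀ κ > (0 : ℝ), IsolatedCalmAt f xbar ybar κ →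
      ∀ c : ℝ, 0 < c → c < 1 / (4 * κ) → ConjIsolGrowth f xbar ybar c) ∧
    (∀ c > (0 : ℝ), ConjIsolGrowth f xbar ybar c → IsolatedCalmAt f xbar ybar (1 / c)) :=
  stmt_13_general hrefl f hne_bot hlsc hconv xbar ybar hybar
end
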